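/- arXiv:1911.00579 — 10 statements merged into one kernel-verified Lean document; each statement's English description precedes it below -/
import Mathlib

section
/- Let C be an n×n real correlation matrix. Then for every n×n real symmetric matrix X, the Hadamard product C ∘ X is majorized by X; that is, the vector of eigenvalues of C ∘ X is majorized by the vector of eigenvalues of X. -/
open Matrix

/-- `v` is majorized by `w`: for every `k`, the sum of the `k` largest entries of `v`
is at most the sum of the `k` largest entries of `w`, with equality for `k = n`.
Stated equivalently: every subset sum of `v` is dominated by some subset sum of `w`
of the same cardinality, and the total sums agree. -/
def VecMajorizedBy {ι : Type*} [Fintype ι] (v w : ι → ℝ) : Prop :=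
  (∀ s : Finset ι, ∃ t : Finset ι, t.card = s.card ∧ ∑ i ∈ s, v i ≤ ∑ i ∈ t, w i) ∧
    ∑ i, v i = ∑ i, w i

/-- `X` is majorized by `Y`: both are (real) symmetric and the eigenvalue vector of `X`
is majorized by the eigenvalue vector of `Y`. -/
def MatMajorizedBy {ι : Type*} [Fintype ι] [DecidableEq ι]
    (X Y : Matrix ι ι ℝ) : Prop :=
  ∃ (hX : X.IsHermitian) (hY : Y.IsHermitian),
    VecMajorizedBy hX.eigenvalues hY.eigenvalues

/-!
Let `P` be the spectral projection of `C ⊙ X` onto the eigenvectors indexed by `s`, so that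
`∑ i ∈ s, λᵢ(C ⊙ X) = tr (P (C ⊙ X)) = tr ((C ⊙ P) X)`. By the Schur product theorem applied to
`P` and `1 - P`, we have `0 ≤ C ⊙ P ≤ 1`, and `tr (C ⊙ P) = tr P = #s` since `C` has unit diagonal.
In an eigenbasis of `X`, `tr ((C ⊙ P) X)` is thus a combination of the eigenvalues of `X` with
weights in `[0, 1]` of total mass `#s`, and such a combination is at most the sum of suitable `#s`
of them (fractional knapsack).
-/

open Finset

section FractionalKnapsack

variable {ι R : Type*} [Field R] [LinearOrder R] [IsStrictOrderedRing R]

lemma le_of_forall_card_eq_sum_le {d : ι → R} {t : Finset ι}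
    (hmax : ∀ u : Finset ι, #u = #t → ∑ i ∈ u, d i ≤ ∑ i ∈ t, d i)
    {i j : ι} (hi : i ∈ t) (hj : j ∉ t) : d j ≤ d i := by
  classical
  have hj' : j ∉ t.erase i := fun h => hj (mem_of_mem_erase h)
  have hswap := hmax (insert j (t.erase i)) <| by
    rw [card_insert_of_notMem hj', card_erase_add_one hi]
  rw [sum_insert hj', sum_erase_eq_sub hi] at hswap
  linarith

lemma exists_card_eq_sum_mul_le_sum [Fintype ι] (d m : ι → R) {k : ℕ}
    (hm0 : ∀ i, 0 ≤ m i) (hm1 : ∀ i, m i ≤ 1) (hsum : ∑ i, m i = k) :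
    ∃ t : Finset ι, #t = k ∧ ∑ i, d i * m i ≤ ∑ i ∈ t, d i := by
  classical
  have hk : k ≤ Fintype.card ι := by
    have : (k : R) ≤ Fintype.card ι := by
      simpa [← hsum] using sum_le_sum fun i (_ : i ∈ univ) => hm1 i
    exact_mod_cast this
  obtain ⟨t, ht, hmax⟩ := exists_max_image (univ.powersetCard k) (fun t => ∑ i ∈ t, d i)
    (powersetCard_nonempty.mpr (by simpa using hk))
  have htk : #t = k := (mem_powersetCard.mp ht).2
  refine ⟨t, htk, ?_⟩
  obtain rfl | ⟨i₀, hi₀, hmin⟩ := t.eq_empty_or_nonempty.imp id (exists_min_image t d)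
  · have hm : ∀ i, m i = 0 := fun i =>
      (sum_eq_zero_iff_of_nonneg fun i _ => hm0 i).mp (by simpa [← htk] using hsum) i (mem_univ i)
    simp [hm]
  have hthr : ∀ j ∉ t, d j ≤ d i₀ := fun j hj =>
    le_of_forall_card_eq_sum_le
      (fun u hu => hmax u (mem_powersetCard.mpr ⟨subset_univ u, hu ▸ htk⟩)) hi₀ hj
  -- The mass outside `t` equals the deficit inside `t`, and `d i₀` separates the two parts.
  have hmass : ∑ j ∈ tᶜ, m j = ∑ i ∈ t, (1 - m i) := by
    have := sum_add_sum_compl t m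
    rw [sum_sub_distrib, sum_const, htk]
    simp only [nsmul_eq_mul, mul_one]
    linarith
  have hout : ∑ j ∈ tᶜ, d j * m j ≤ ∑ i ∈ t, d i * (1 - m i) :=
    calc ∑ j ∈ tᶜ, d j * m j ≤ ∑ j ∈ tᶜ, d i₀ * m j :=
          sum_le_sum fun j hj => mul_le_mul_of_nonneg_right (hthr j (mem_compl.mp hj)) (hm0 j)
      _ = ∑ i ∈ t, d i₀ * (1 - m i) := by rw [← mul_sum, ← mul_sum, hmass]
      _ ≤ ∑ i ∈ t, d i * (1 - m i) :=
          sum_le_sum fun i hi => mul_le_mul_of_nonneg_right (hmin i hi) (sub_nonneg.mpr (hm1 i))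
  calc ∑ i, d i * m i = ∑ i ∈ t, d i * m i + ∑ j ∈ tᶜ, d j * m j := (sum_add_sum_compl t _).symm
    _ ≤ ∑ i ∈ t, (d i * m i + d i * (1 - m i)) := by rw [sum_add_distrib]; linarith
    _ = ∑ i ∈ t, d i := sum_congr rfl fun i _ => by ring

end FractionalKnapsack

namespace Matrix

variable {ι α : Type*}

lemma trace_hadamard_mul [Fintype ι] [CommSemiring α] (A B X : Matrix ι ι α) :
    ((A ⊙ B) * X).trace = (B * (Aᵀ ⊙ X)).trace := by
  simp only [trace, diag, mul_apply, hadamard_apply, transpose_apply]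
  exact sum_congr rfl fun i _ => sum_congr rfl fun j _ => by ring

lemma trace_hadamard_of_diag_eq_one [Fintype ι] [MulOneClass α] [AddCommMonoid α]
    {C : Matrix ι ι α} (hC : ∀ i, C i i = 1) (P : Matrix ι ι α) : (C ⊙ P).trace = P.trace := by
  simp [trace, hC]

lemma hadamard_one_sub_of_diag_eq_one [DecidableEq ι] [Ring α] {C : Matrix ι ι α}
    (hC : ∀ i, C i i = 1) (P : Matrix ι ι α) : C ⊙ (1 - P) = 1 - C ⊙ P := by
  ext i j
  rcases eq_or_ne i j with rfl | hij
  · simp [mul_sub, hC]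
  · simp [hij]

end Matrix

namespace Matrix.IsHermitian

variable {ι : Type*} [Fintype ι] [DecidableEq ι] {A : Matrix ι ι ℝ} (hA : A.IsHermitian)

local notation "U" => (hA.eigenvectorUnitary : Matrix ι ι ℝ)

lemma spectral_theorem_real : A = U * diagonal hA.eigenvalues * star U := by
  simpa [RCLike.ofReal_real_eq_id] using hA.spectral_theorem

lemma trace_mul_eq_sum_diag_mul_eigenvalues (M : Matrix ι ι ℝ) :
    (M * A).trace = ∑ i, (star U * M * U) i i * hA.eigenvalues i := by
  conv_lhs => rw [hA.spectral_theorem_real]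
  rw [← Matrix.mul_assoc, ← Matrix.mul_assoc, trace_mul_cycle, ← Matrix.mul_assoc]
  simp [trace, mul_diagonal]

noncomputable def eigenProj (s : Finset ι) : Matrix ι ι ℝ :=
  U * diagonal (fun i => if i ∈ s then 1 else 0) * star U

lemma star_mul_eigenProj_mul (s : Finset ι) :
    star U * hA.eigenProj s * U = diagonal (fun i => if i ∈ s then 1 else 0) := by
  simp only [eigenProj, Matrix.mul_assoc]
  rw [Unitary.star_mul_self_of_mem hA.eigenvectorUnitary.2, Matrix.mul_one, ← Matrix.mul_assoc,
    Unitary.star_mul_self_of_mem hA.eigenvectorUnitary.2, Matrix.one_mul]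

lemma one_sub_eigenProj (s : Finset ι) : 1 - hA.eigenProj s = hA.eigenProj sᶜ := by
  have hdiag : diagonal (fun i => if i ∈ sᶜ then (1 : ℝ) else 0)
      = 1 - diagonal (fun i => if i ∈ s then 1 else 0) := by
    rw [← diagonal_one, diagonal_sub]
    congr 1
    ext i
    by_cases hi : i ∈ s <;> simp [hi]
  rw [eigenProj, eigenProj, hdiag, Matrix.mul_sub, Matrix.sub_mul, Matrix.mul_one,
    Unitary.mul_star_self_of_mem hA.eigenvectorUnitary.2]

lemma eigenProj_posSemidef (s : Finset ι) : (hA.eigenProj s).PosSemidef := by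
  rw [eigenProj, star_eq_conjTranspose]
  exact (PosSemidef.diagonal fun i => by positivity).mul_mul_conjTranspose_same U

lemma trace_eigenProj (s : Finset ι) : (hA.eigenProj s).trace = #s := by
  rw [eigenProj, trace_mul_cycle]
  simp [trace_diagonal]

lemma trace_eigenProj_mul (s : Finset ι) :
    (hA.eigenProj s * A).trace = ∑ i ∈ s, hA.eigenvalues i := by
  rw [hA.trace_mul_eq_sum_diag_mul_eigenvalues, hA.star_mul_eigenProj_mul]
  simp [ite_mul, sum_ite_mem]

lemma exists_card_eq_trace_mul_le_sum_eigenvalues {M : Matrix ι ι ℝ} (hM : M.PosSemidef)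
    (hM1 : (1 - M).PosSemidef) {k : ℕ} (htr : M.trace = k) :
    ∃ t : Finset ι, #t = k ∧ (M * A).trace ≤ ∑ i ∈ t, hA.eigenvalues i := by
  have hconj : ∀ {B : Matrix ι ι ℝ}, B.PosSemidef → (star U * B * U).PosSemidef := fun hB => by
    simpa only [star_eq_conjTranspose] using hB.conjTranspose_mul_mul_same U
  have hdiag0 : ∀ i, 0 ≤ (star U * M * U) i i := fun i => (hconj hM).diag_nonneg
  have hdiag1 : ∀ i, (star U * M * U) i i ≤ 1 := fun i => by
    have h := (hconj hM1).diag_nonneg (i := i)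
    rwa [Matrix.mul_sub, Matrix.sub_mul, Matrix.mul_one,
      Unitary.star_mul_self_of_mem hA.eigenvectorUnitary.2, sub_apply, one_apply_eq,
      sub_nonneg] at h
  have hmass : (star U * M * U).trace = k := by
    rw [← htr, Matrix.mul_assoc, trace_mul_comm, Matrix.mul_assoc,
      Unitary.mul_star_self_of_mem hA.eigenvectorUnitary.2, Matrix.mul_one]
  obtain ⟨t, ht, hle⟩ := exists_card_eq_sum_mul_le_sum hA.eigenvalues _ hdiag0 hdiag1 hmass
  refine ⟨t, ht, ?_⟩
  rw [hA.trace_mul_eq_sum_diag_mul_eigenvalues]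
  simpa only [mul_comm] using hle

end Matrix.IsHermitian

/-- If `C` is an `n × n` real correlation matrix (positive semidefinite with unit diagonal),
then for every real symmetric `X`, the Hadamard product `C ⊙ X` is majorized by `X`. -/
theorem correlation_hadamard_majorized {n : ℕ} (C X : Matrix (Fin n) (Fin n) ℝ)
    (hC : C.PosSemidef) (hCdiag : ∀ i, C i i = 1) (hX : X.IsHermitian) :
    MatMajorizedBy (C ⊙ X) X := by
  have hCX : (C ⊙ X).IsHermitian := hC.isHermitian.hadamard hX
  refine ⟨hCX, hX, fun s => ?_, ?_⟩
  · set P := hCX.eigenProj s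
    have hM : (C ⊙ P).PosSemidef := hC.hadamard (hCX.eigenProj_posSemidef s)
    have hM1 : (1 - C ⊙ P).PosSemidef := by
      rw [← hadamard_one_sub_of_diag_eq_one hCdiag, hCX.one_sub_eigenProj]
      exact hC.hadamard (hCX.eigenProj_posSemidef sᶜ)
    obtain ⟨t, ht, hle⟩ := hX.exists_card_eq_trace_mul_le_sum_eigenvalues hM hM1
      (by rw [trace_hadamard_of_diag_eq_one hCdiag, hCX.trace_eigenProj])
    refine ⟨t, ht, ?_⟩
    calc ∑ i ∈ s, hCX.eigenvalues i = (P * (C ⊙ X)).trace := (hCX.trace_eigenProj_mul s).symm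
      _ = (C ⊙ P * X).trace := by
          rw [trace_hadamard_mul, (isHermitian_iff_isSymm.mp hC.isHermitian).eq]
      _ ≤ ∑ i ∈ t, hX.eigenvalues i := hle
  · have hsum := hCX.trace_eq_sum_eigenvalues
    rw [trace_hadamard_of_diag_eq_one hCdiag, hX.trace_eq_sum_eigenvalues] at hsum
    simpa using hsum.symm
end

section
/- Let C be an n×n real symmetric matrix such that for every n×n real symmetric matrix X, the Hadamard product C ∘ X is majorized by X. Then C is a correlation matrix, i.e., C is positive semidefinite and every diagonal entry of C equals 1. -/
open Matrix

/-!
Positive semidefiniteness passes down majorization: if `w ≥ 0` and `v ≺ w`, then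
`v j = ∑ v - ∑_{i ≠ j} v i ≥ ∑ w - (a sum of n - 1 entries of w) ≥ 0`. Hence for the
positive semidefinite `X = v vᵀ` the matrix `C ⊙ v vᵀ` is positive semidefinite, and its
quadratic form at the all-ones vector is `vᵀ C v`. Equality of traces for `X = E_ii`
gives `C i i = 1`.
-/

section

variable {ι : Type*} [Fintype ι]

theorem VecMajorizedBy.nonneg {v w : ι → ℝ} (h : VecMajorizedBy v w) (hw : ∀ i, 0 ≤ w i)
    (j : ι) : 0 ≤ v j := by
  classical
  obtain ⟨t, -, hle⟩ := h.1 (Finset.univ.erase j)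
  have htw : ∑ i ∈ t, w i ≤ ∑ i, w i :=
    Finset.sum_le_sum_of_subset_of_nonneg t.subset_univ fun i _ _ => hw i
  have hv : ∑ i ∈ Finset.univ.erase j, v i + v j = ∑ i, v i :=
    Finset.sum_erase_add _ _ (Finset.mem_univ j)
  linarith [h.2]

theorem one_dotProduct_hadamard_vecMulVec_mulVec_one (C : Matrix ι ι ℝ) (v : ι → ℝ) :
    1 ⬝ᵥ (C ⊙ vecMulVec v v) *ᵥ 1 = v ⬝ᵥ C *ᵥ v := by
  simp only [dotProduct, mulVec, hadamard_apply, vecMulVec_apply, Pi.one_apply, one_mul,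
    mul_one, Finset.mul_sum]
  exact Finset.sum_congr rfl fun i _ => Finset.sum_congr rfl fun j _ => by ring

theorem posSemidef_of_forall_hadamard_vecMulVec {C : Matrix ι ι ℝ} (hC : C.IsHermitian)
    (h : ∀ v, (C ⊙ vecMulVec v v).PosSemidef) : C.PosSemidef :=
  .of_dotProduct_mulVec_nonneg hC fun v => by
    simpa [one_dotProduct_hadamard_vecMulVec_mulVec_one] using
      (h v).dotProduct_mulVec_nonneg 1

variable [DecidableEq ι] {X Y : Matrix ι ι ℝ}

theorem MatMajorizedBy.trace_eq (h : MatMajorizedBy X Y) : X.trace = Y.trace := by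
  obtain ⟨hX, hY, hXY⟩ := h
  simpa [hX.trace_eq_sum_eigenvalues, hY.trace_eq_sum_eigenvalues] using hXY.2

theorem MatMajorizedBy.posSemidef (h : MatMajorizedBy X Y) (hY : Y.PosSemidef) :
    X.PosSemidef := by
  obtain ⟨hX, _, hXY⟩ := h
  exact hX.posSemidef_iff_eigenvalues_nonneg.mpr (hXY.nonneg hY.eigenvalues_nonneg)

theorem trace_hadamard_diagonal (C : Matrix ι ι ℝ) (w : ι → ℝ) :
    (C ⊙ diagonal w).trace = ∑ i, C i i * w i := by
  simp [hadamard_diagonal, trace_diagonal]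

end

/-- If `C` is a real symmetric matrix such that `C ⊙ X` is majorized by `X` for every
real symmetric `X`, then `C` is a correlation matrix: positive semidefinite with all
diagonal entries equal to `1`. -/
theorem hadamard_majorized_correlation {n : ℕ} (C : Matrix (Fin n) (Fin n) ℝ)
    (hC : C.IsHermitian)
    (h : ∀ X : Matrix (Fin n) (Fin n) ℝ, X.IsHermitian → MatMajorizedBy (C ⊙ X) X) :
    C.PosSemidef ∧ ∀ i, C i i = 1 := by
  refine ⟨posSemidef_of_forall_hadamard_vecMulVec hC fun v => ?_, fun i => ?_⟩
  · have hv : (vecMulVec v v).PosSemidef := by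
      simpa using posSemidef_vecMulVec_self_star v
    exact (h _ hv.isHermitian).posSemidef hv
  · have htr := (h _ (isHermitian_diagonal (Pi.single i 1))).trace_eq
    simpa [trace_hadamard_diagonal, trace_diagonal, Pi.single_apply] using htr
end

section
/- Let X and Y be n×n real symmetric matrices such that X is majorized by Y. Then there exist finitely many n×n real orthogonal matrices U_1,…,U_m and nonnegative real numbers t_1,…,t_m with t_1 + ⋯ + t_m = 1 such that X = ∑_{i=1}^m t_i U_i Y U_iᵀ. -/
open Matrix

/-! A vector `v` majorized by `w` is a convex combination of the permutations `w ∘ σ` (Rado).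
Otherwise a separating functional `c` has `∑ cᵢ vᵢ > ∑ cᵢ w_{σ i}` for every `σ`; but for `σ` with
`w ∘ σ` ordered like `c`, writing `c` as a combination of indicators of its upper level sets reduces
`∑ cᵢ vᵢ ≤ ∑ cᵢ w_{σ i}` to the subset-sum inequalities of majorization. Applied to eigenvalues,
this writes `X = Q diag λ(X) Qᴴ` as a convex combination of the `Q diag (λ(Y) ∘ σ) Qᴴ`, each a
unitary (for real matrices, orthogonal) conjugate of `Y`. -/

open Finset

theorem Finset.sum_le_sum_of_card_eq_of_forall_le {ι M : Type*} [DecidableEq ι]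
    [AddCommMonoid M] [LinearOrder M] [IsOrderedAddMonoid M] {s t : Finset ι} {g : ι → M}
    (hcard : t.card = s.card) (hs : ∀ i ∈ s, ∀ j ∉ s, g j ≤ g i) : ∑ j ∈ t, g j ≤ ∑ i ∈ s, g i := by
  have hsdiff : ∑ j ∈ t \ s, g j ≤ ∑ i ∈ s \ t, g i := by
    have hcard' : (t \ s).card = (s \ t).card := card_sdiff_comm hcard
    rcases (t \ s).eq_empty_or_nonempty with hts | hts
    · rw [hts, card_empty, eq_comm, card_eq_zero] at hcard'
      simp [hts, hcard']
    obtain ⟨j, hj, hjmax⟩ := (t \ s).exists_max_image g hts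
    calc ∑ j ∈ t \ s, g j ≤ (t \ s).card • g j := sum_le_card_nsmul _ _ _ hjmax
      _ = (s \ t).card • g j := by rw [hcard']
      _ ≤ ∑ i ∈ s \ t, g i := card_nsmul_le_sum _ _ _ fun i hi ↦
          hs i (mem_sdiff.1 hi).1 j (mem_sdiff.1 hj).2
  rw [← sum_inter_add_sum_sdiff t s, ← sum_inter_add_sum_sdiff s t, inter_comm]
  exact add_le_add le_rfl hsdiff

section Majorization

variable {ι : Type*} [Fintype ι]

theorem exists_equiv_fin_monotone {α : Type*} [LinearOrder α] (f : ι → α) :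
    ∃ e : ι ≃ Fin (Fintype.card ι), Monotone (f ∘ e.symm) :=
  ⟨(Fintype.equivFin ι).trans (Tuple.sort (f ∘ (Fintype.equivFin ι).symm)).symm,
    by simpa [Function.comp_assoc] using Tuple.monotone_sort (f ∘ (Fintype.equivFin ι).symm)⟩

theorem exists_perm_monovary {α β : Type*} [LinearOrder α] [LinearOrder β] (f : ι → α)
    (g : ι → β) : ∃ σ : Equiv.Perm ι, Monovary (f ∘ σ) g := by
  obtain ⟨e₁, he₁⟩ := exists_equiv_fin_monotone f
  obtain ⟨e₂, he₂⟩ := exists_equiv_fin_monotone g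
  refine ⟨e₂.trans e₁.symm, fun i j hij ↦ he₁ ?_⟩
  by_contra! hji
  simpa using (he₂ hji.le).not_gt (by simpa using hij)

theorem VecMajorizedBy.comp_perm {v w : ι → ℝ} (h : VecMajorizedBy v w) (σ : Equiv.Perm ι) :
    VecMajorizedBy v (w ∘ σ) := by
  refine ⟨fun s ↦ ?_, h.2.trans (Equiv.sum_comp σ w).symm⟩
  obtain ⟨t, hts, hst⟩ := h.1 s
  refine ⟨t.map σ.symm.toEmbedding, by rw [card_map, hts], hst.trans_eq ?_⟩
  simp [sum_map]

theorem VecMajorizedBy.sum_mul_le_of_monovary {v w c : ι → ℝ} (h : VecMajorizedBy v w)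
    (hwc : Monovary w c) : ∑ i, c i * v i ≤ ∑ i, c i * w i := by
  classical
  induction hk : (univ.image c).card using Nat.strong_induction_on generalizing c with
  | _ k ih =>
  rcases isEmpty_or_nonempty ι with _ | _
  · simp
  obtain ⟨i₀, -, hi₀⟩ := univ.exists_min_image c univ_nonempty
  set L := univ.filter fun i ↦ c i₀ < c i
  rcases L.eq_empty_or_nonempty with hL | hL
  · have hc : ∀ i, c i = c i₀ := fun i ↦
      le_antisymm (by simpa [L] using filter_eq_empty_iff.1 hL (mem_univ i)) (hi₀ i (mem_univ i))
    simp only [hc, ← mul_sum, h.2, le_refl]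
  obtain ⟨i₁, hi₁L, hi₁⟩ := L.exists_min_image c hL
  have hlt : c i₀ < c i₁ := (mem_filter.1 hi₁L).2
  set c' := fun i ↦ max (c i) (c i₁)
  -- `c'` raises the lowest level `c i₀` of `c` to the next one `c i₁`, so it has one value fewer.
  have hdecomp : ∀ u : ι → ℝ, ∑ i, c i * u i =
      ∑ i, c' i * u i + (c i₀ - c i₁) * ∑ i, u i + (c i₁ - c i₀) * ∑ i ∈ L, u i := by
    intro u
    rw [sum_filter, mul_sum, mul_sum, ← sum_add_distrib, ← sum_add_distrib]
    refine sum_congr rfl fun i _ ↦ ?_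
    by_cases hi : c i₀ < c i
    · have : c i₁ ≤ c i := hi₁ i (mem_filter.2 ⟨mem_univ i, hi⟩)
      rw [if_pos hi]; simp only [c', max_eq_left this]; ring
    · have : c i = c i₀ := le_antisymm (not_lt.1 hi) (hi₀ i (mem_univ _))
      rw [if_neg hi]; simp only [c', this, max_eq_right hlt.le]; ring
  have hL_top : ∑ i ∈ L, v i ≤ ∑ i ∈ L, w i := by
    obtain ⟨t, ht, hLt⟩ := h.1 L
    refine hLt.trans (sum_le_sum_of_card_eq_of_forall_le ht fun i hi j hj ↦ hwc ?_)
    exact (by simpa [L] using hj : c j ≤ c i₀).trans_lt (mem_filter.1 hi).2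
  have hc'_lt : (univ.image c').card < k := by
    rw [← hk]
    refine card_lt_card ((ssubset_iff_of_subset ?_).2 ⟨c i₀, mem_image_of_mem c (mem_univ _), ?_⟩)
    · intro x hx
      obtain ⟨i, -, rfl⟩ := mem_image.1 hx
      rcases max_choice (c i) (c i₁) with hmax | hmax <;> simp [c', hmax]
    · simp only [mem_image, mem_univ, true_and, not_exists]
      exact fun i ↦ (hlt.trans_le (le_max_right _ _)).ne'
  have hwc' : Monovary w c' := fun i j hij ↦
    hwc (Monotone.reflect_lt (f := fun x ↦ max x (c i₁)) (fun _ _ hab ↦ max_le_max hab le_rfl) hij)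
  rw [hdecomp v, hdecomp w, h.2]
  exact add_le_add (add_le_add (ih _ hc'_lt hwc' rfl) le_rfl)
    (mul_le_mul_of_nonneg_left hL_top (sub_nonneg.2 hlt.le))

theorem VecMajorizedBy.mem_convexHull_perm {v w : ι → ℝ} (h : VecMajorizedBy v w) :
    v ∈ convexHull ℝ (Set.range fun σ : Equiv.Perm ι ↦ w ∘ σ) := by
  classical
  by_contra hv
  obtain ⟨f, u, hfu, huv⟩ := geometric_hahn_banach_closed_point (convex_convexHull ℝ _)
    ((Set.finite_range _).isCompact_convexHull ℝ).isClosed hv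
  set c : ι → ℝ := fun i ↦ f fun j ↦ if i = j then 1 else 0
  have hf : ∀ x, f x = ∑ i, c i * x i := fun x ↦ by
    simpa [c, mul_comm] using LinearMap.pi_apply_eq_sum_univ f.toLinearMap x
  obtain ⟨σ, hσ⟩ := exists_perm_monovary w c
  have := (h.comp_perm σ).sum_mul_le_of_monovary hσ
  have := hfu _ (subset_convexHull ℝ _ ⟨σ, rfl⟩)
  rw [hf] at *
  linarith

end Majorization

section UnitaryOrbit

variable {ι : Type*} [Fintype ι] [DecidableEq ι]

theorem Equiv.Perm.permMatrix_mem_unitaryGroup {R : Type*} [CommRing R] [StarRing R]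
    (σ : Equiv.Perm ι) : σ.permMatrix R ∈ unitaryGroup ι R := by
  rw [mem_unitaryGroup_iff, star_eq_conjTranspose, conjTranspose_permMatrix, ← permMatrix_mul,
    inv_mul_cancel, permMatrix_one]

theorem Matrix.permMatrix_mul_diagonal_mul_conjTranspose {R : Type*} [NonAssocSemiring R]
    [StarRing R] (σ : Equiv.Perm ι) (d : ι → R) :
    σ.permMatrix R * diagonal d * (σ.permMatrix R)ᴴ = diagonal (d ∘ σ) := by
  rw [conjTranspose_permMatrix, Equiv.Perm.permMatrix, Equiv.Perm.permMatrix,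
    PEquiv.toMatrix_toPEquiv_mul, PEquiv.mul_toMatrix_toPEquiv, submatrix_submatrix]
  exact submatrix_diagonal_equiv d σ

theorem Matrix.IsHermitian.mem_convexHull_unitaryConj_of_majorized {𝕜 : Type*} [RCLike 𝕜]
    {X Y : Matrix ι ι 𝕜} (hX : X.IsHermitian) (hY : Y.IsHermitian)
    (h : VecMajorizedBy hX.eigenvalues hY.eigenvalues) :
    X ∈ convexHull ℝ (Set.range fun U : unitaryGroup ι 𝕜 ↦ (U : Matrix ι ι 𝕜) * Y * star U) := by
  set Q := hX.eigenvectorUnitary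
  set R := hY.eigenvectorUnitary
  let φ : (ι → ℝ) →ₗ[ℝ] Matrix ι ι 𝕜 := (Unitary.conjStarAlgAut ℝ _ Q).toAlgEquiv.toLinearMap ∘ₗ
    diagonalLinearMap ι ℝ 𝕜 ∘ₗ (RCLike.ofRealAm : ℝ →ₐ[ℝ] 𝕜).toLinearMap.compLeft ι
  have hφ (d : ι → ℝ) :
      φ d = (Q : Matrix ι ι 𝕜) * diagonal (RCLike.ofReal ∘ d) * star (Q : Matrix ι ι 𝕜) := rfl
  have hXφ : X = φ hX.eigenvalues := by rw [hφ]; exact hX.spectral_theorem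
  rw [hXφ]
  refine convexHull_mono ?_ (φ.image_convexHull _ ▸ Set.mem_image_of_mem φ h.mem_convexHull_perm)
  rintro _ ⟨_, ⟨σ, rfl⟩, rfl⟩
  refine ⟨Q * ⟨σ.permMatrix 𝕜, σ.permMatrix_mem_unitaryGroup⟩ * star R, ?_⟩
  rw [hφ]
  dsimp only
  rw [← Function.comp_assoc, ← permMatrix_mul_diagonal_mul_conjTranspose,
    ← hY.conjStarAlgAut_star_eigenvectorUnitary, Unitary.conjStarAlgAut_apply]
  simp [R, Matrix.mul_assoc, star_mul, star_eq_conjTranspose]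

end UnitaryOrbit

theorem exists_fin_of_mem_convexHull {R E : Type*} [Field R] [LinearOrder R]
    [IsStrictOrderedRing R] [AddCommGroup E] [Module R E] {s : Set E} {x : E}
    (hx : x ∈ convexHull R s) :
    ∃ (m : ℕ) (t : Fin m → R) (z : Fin m → E),
      (∀ i, 0 ≤ t i) ∧ ∑ i, t i = 1 ∧ (∀ i, z i ∈ s) ∧ ∑ i, t i • z i = x := by
  obtain ⟨ι, _, t, z, ht₀, ht₁, hz, rfl⟩ := mem_convexHull_iff_exists_fintype.1 hx
  let e := (Fintype.equivFin ι).symm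
  exact ⟨_, t ∘ e, z ∘ e, fun i ↦ ht₀ _, (e.sum_comp t).trans ht₁, fun i ↦ hz _,
    e.sum_comp fun i ↦ t i • z i⟩

theorem majorized_eq_convexCombination_orthogonalConjugates_general {n : ℕ}
    (X Y : Matrix (Fin n) (Fin n) ℝ)
    (h : MatMajorizedBy X Y) :
    ∃ (m : ℕ) (t : Fin m → ℝ) (U : Fin m → Matrix (Fin n) (Fin n) ℝ),
      (∀ i, 0 ≤ t i) ∧ (∑ i, t i = 1) ∧ (∀ i, U i * (U i)ᵀ = 1) ∧
      X = ∑ i, t i • (U i * Y * (U i)ᵀ) := by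
  obtain ⟨hX, hY, hmaj⟩ := h
  obtain ⟨m, t, M, ht₀, ht₁, hM, hXM⟩ :=
    exists_fin_of_mem_convexHull (hX.mem_convexHull_unitaryConj_of_majorized hY hmaj)
  choose U hU using hM
  refine ⟨m, t, fun i ↦ U i, ht₀, ht₁, fun i ↦ ?_, ?_⟩
  · simpa [star_eq_conjTranspose] using mem_unitaryGroup_iff.1 (U i).2
  · simp [← hXM, ← hU, star_eq_conjTranspose]

/-- If the real symmetric matrix `X` is majorized by the real symmetric matrix `Y`, then
`X` is a convex combination of orthogonal conjugates of `Y`: there are orthogonal matrices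
`U i` and nonnegative weights `t i` summing to `1` with `X = ∑ i, t i • (U i * Y * (U i)ᵀ)`. -/
theorem majorized_eq_convexCombination_orthogonalConjugates {n : ℕ}
    (X Y : Matrix (Fin n) (Fin n) ℝ) (hX : X.IsHermitian) (hY : Y.IsHermitian)
    (h : MatMajorizedBy X Y) :
    ∃ (m : ℕ) (t : Fin m → ℝ) (U : Fin m → Matrix (Fin n) (Fin n) ℝ),
      (∀ i, 0 ≤ t i) ∧ (∑ i, t i = 1) ∧ (∀ i, U i * (U i)ᵀ = 1) ∧
      X = ∑ i, t i • (U i * Y * (U i)ᵀ) :=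
  majorized_eq_convexCombination_orthogonalConjugates_general X Y h
end

section
/- Let A = [a_ij] and B = [b_ij] be n×n real symmetric matrices with b_ij ≠ 0 for all i, j, and suppose the matrix [a_ij / b_ij] is a correlation matrix. Then for every positive integer k and every n×n real symmetric matrix X, the Hadamard product A^{(k)} ∘ X is majorized by B^{(k)} ∘ X, where A^{(k)} = [a_ij^k] and B^{(k)} = [b_ij^k] denote entrywise k-th powers. -/
open Matrix

/-! Put `C = [aᵢⱼ / bᵢⱼ]`. Then `A⁽ᵏ⁾ ⊙ X = C⁽ᵏ⁾ ⊙ (B⁽ᵏ⁾ ⊙ X)`, and `C⁽ᵏ⁾` is again a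
correlation matrix by the Schur product theorem, so it suffices to show `C ⊙ M ≺ M` for a
correlation matrix `C` and a symmetric `M`. If `uᵢ` and `vⱼ` are orthonormal eigenvectors of
`C ⊙ M` and of `M`, expanding `M = ∑ⱼ μⱼ vⱼ vⱼᵀ` gives `λᵢ = ∑ⱼ wᵢⱼ μⱼ` with
`wᵢⱼ = (uᵢ ∘ vⱼ)ᵀ C (uᵢ ∘ vⱼ)`. Positivity of `C`, its unit diagonal and orthonormality make
`W` doubly stochastic, and `Wμ ≺ μ` because the linear functional `W ↦ ∑_{i ∈ s} (Wμ)ᵢ` attains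
its maximum over the Birkhoff polytope at a permutation matrix. -/

open scoped ComplexOrder

namespace Matrix

variable {ι : Type*} [Fintype ι]

theorem PosSemidef.map_pow {𝕜 : Type*} [RCLike 𝕜] {C : Matrix ι ι 𝕜} (hC : C.PosSemidef) :
    ∀ k : ℕ, (C.map (· ^ k)).PosSemidef
  | 0 => by
    convert posSemidef_vecMulVec_self_star (1 : ι → 𝕜)
    ext; simp [vecMulVec]
  | k + 1 => by
    rw [show C.map (· ^ (k + 1)) = C.map (· ^ k) ⊙ C by ext; simp [pow_succ]]
    exact (hC.map_pow k).hadamard hC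

def hadamardWeight (C U V : Matrix ι ι ℝ) : Matrix ι ι ℝ :=
  of fun i j => (Uᵀ i * Vᵀ j) ⬝ᵥ C *ᵥ (Uᵀ i * Vᵀ j)

theorem hadamardWeight_transpose (C U V : Matrix ι ι ℝ) :
    (hadamardWeight C U V)ᵀ = hadamardWeight C V U := by
  ext i j
  simp only [transpose_apply, hadamardWeight, of_apply, mul_comm (Uᵀ j)]

variable [DecidableEq ι]

theorem vecMajorizedBy_mulVec_of_mem_doublyStochastic {W : Matrix ι ι ℝ}
    (hW : W ∈ doublyStochastic ℝ ι) (μ : ι → ℝ) : VecMajorizedBy (W *ᵥ μ) μ := by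
  refine ⟨fun s => ?_, sum_mulVec_of_mem_doublyStochastic hW⟩
  let f : Matrix ι ι ℝ →ₗ[ℝ] ℝ :=
    { toFun := fun W => ∑ i ∈ s, (W *ᵥ μ) i
      map_add' := fun _ _ => by simp only [add_mulVec, Pi.add_apply, Finset.sum_add_distrib]
      map_smul' := fun _ _ => by simp [smul_mulVec, Finset.mul_sum] }
  rw [← SetLike.mem_coe, doublyStochastic_eq_convexHull_permMatrix] at hW
  obtain ⟨-, ⟨σ, rfl⟩, hσ⟩ :=
    (f.convexOn convex_univ).exists_ge_of_mem_convexHull (Set.subset_univ _) hW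
  refine ⟨s.map σ.toEmbedding, s.card_map _, ?_⟩
  simpa [f, permMatrix_mulVec] using hσ

theorem IsHermitian.eq_eigenvectorUnitary_mul_diagonal_mul_transpose {M : Matrix ι ι ℝ}
    (hM : M.IsHermitian) :
    M = (hM.eigenvectorUnitary : Matrix ι ι ℝ) * diagonal hM.eigenvalues *
      (hM.eigenvectorUnitary : Matrix ι ι ℝ)ᵀ := by
  conv_lhs => rw [hM.spectral_theorem]
  simp [Unitary.conjStarAlgAut_apply, star_eq_conjTranspose]

theorem dotProduct_hadamard_mulVec_eq_sum {R : Type*} [CommSemiring R] (C V : Matrix ι ι R)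
    (μ x : ι → R) :
    x ⬝ᵥ (C ⊙ (V * diagonal μ * Vᵀ)) *ᵥ x = ∑ j, μ j * ((x * Vᵀ j) ⬝ᵥ C *ᵥ (x * Vᵀ j)) := by
  have hM : ∀ a b, (V * diagonal μ * Vᵀ) a b = ∑ j, V a j * μ j * V b j := by
    intro a b; simp only [mul_apply (M := V * diagonal μ), mul_diagonal, transpose_apply]
  simp only [dotProduct, mulVec, hadamard_apply, hM, transpose_apply, Pi.mul_apply,
    Finset.mul_sum, Finset.sum_mul]
  conv_lhs => enter [2, a]; rw [Finset.sum_comm]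
  rw [Finset.sum_comm]
  exact Finset.sum_congr rfl fun j _ => Finset.sum_congr rfl fun a _ =>
    Finset.sum_congr rfl fun b _ => by ring

theorem sum_hadamardWeight_row {C U V : Matrix ι ι ℝ} (hCd : C.diag = 1)
    (hU : U ∈ orthogonalGroup ι ℝ) (hV : V ∈ orthogonalGroup ι ℝ) (i : ι) :
    ∑ j, hadamardWeight C U V i j = 1 := by
  have hC1 : C ⊙ (V * diagonal 1 * Vᵀ) = 1 := by
    rw [show diagonal (1 : ι → ℝ) = 1 from diagonal_one, Matrix.mul_one,
      (mem_orthogonalGroup_iff ι ℝ).mp hV, hadamard_one_eq_one_iff.mpr hCd]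
  have := dotProduct_hadamard_mulVec_eq_sum C V 1 (Uᵀ i)
  simp only [hC1, one_mulVec, Pi.one_apply, one_mul] at this
  calc ∑ j, hadamardWeight C U V i j = Uᵀ i ⬝ᵥ Uᵀ i := by
        simpa [hadamardWeight] using this.symm
    _ = (Uᵀ * U) i i := by simp [mul_apply, dotProduct]
    _ = 1 := by rw [(mem_orthogonalGroup_iff' ι ℝ).mp hU, one_apply_eq]

theorem hadamardWeight_mem_doublyStochastic {C U V : Matrix ι ι ℝ} (hC : C.PosSemidef)
    (hCd : C.diag = 1) (hU : U ∈ orthogonalGroup ι ℝ) (hV : V ∈ orthogonalGroup ι ℝ) :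
    hadamardWeight C U V ∈ doublyStochastic ℝ ι := by
  refine mem_doublyStochastic_iff_sum.mpr ⟨fun i j => ?_, sum_hadamardWeight_row hCd hU hV,
    fun j => ?_⟩
  · simpa [hadamardWeight] using hC.dotProduct_mulVec_nonneg (Uᵀ i * Vᵀ j)
  · simpa [← hadamardWeight_transpose C V U] using sum_hadamardWeight_row hCd hV hU j

theorem IsHermitian.eigenvalues_hadamard {C M : Matrix ι ι ℝ} (hCM : (C ⊙ M).IsHermitian)
    (hM : M.IsHermitian) :
    hCM.eigenvalues = hadamardWeight C hCM.eigenvectorUnitary hM.eigenvectorUnitary *ᵥ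
      hM.eigenvalues := by
  have hquad : ∀ x, x ⬝ᵥ (C ⊙ M) *ᵥ x = ∑ j, hM.eigenvalues j *
      ((x * (hM.eigenvectorUnitary : Matrix ι ι ℝ)ᵀ j) ⬝ᵥ
        C *ᵥ (x * (hM.eigenvectorUnitary : Matrix ι ι ℝ)ᵀ j)) := fun x => by
    conv_lhs => rw [hM.eq_eigenvectorUnitary_mul_diagonal_mul_transpose]
    exact dotProduct_hadamard_mulVec_eq_sum _ _ _ _
  ext i
  rw [hCM.eigenvalues_eq i, ← eigenvectorUnitary_transpose_apply, RCLike.re_to_real, star_trivial,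
    hquad, mulVec, dotProduct]
  simp only [hadamardWeight, of_apply, mul_comm]

theorem matMajorizedBy_hadamard {C M : Matrix ι ι ℝ} (hC : C.PosSemidef) (hCd : C.diag = 1)
    (hM : M.IsHermitian) : MatMajorizedBy (C ⊙ M) M := by
  have hCM := hC.isHermitian.hadamard hM
  refine ⟨hCM, hM, ?_⟩
  rw [hCM.eigenvalues_hadamard hM]
  exact vecMajorizedBy_mulVec_of_mem_doublyStochastic
    (hadamardWeight_mem_doublyStochastic hC hCd hCM.eigenvectorUnitary.2
      hM.eigenvectorUnitary.2) _

end Matrix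

theorem hadamardPow_majorized_general {n : ℕ} (A B : Matrix (Fin n) (Fin n) ℝ)
    (hB : B.IsHermitian) (hBne : ∀ i j, B i j ≠ 0)
    (hC : (Matrix.of fun i j => A i j / B i j).PosSemidef)
    (hCdiag : ∀ i, A i i / B i i = 1)
    (k : ℕ) (X : Matrix (Fin n) (Fin n) ℝ) (hX : X.IsHermitian) :
    MatMajorizedBy ((Matrix.of fun i j => A i j ^ k) ⊙ X)
      ((Matrix.of fun i j => B i j ^ k) ⊙ X) := by
  have hBX : ((Matrix.of fun i j => B i j ^ k) ⊙ X).IsHermitian :=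
    (hB.map (· ^ k) fun _ => by simp).hadamard hX
  have hAX : (Matrix.of fun i j => A i j ^ k) ⊙ X =
      (Matrix.of fun i j => A i j / B i j).map (· ^ k) ⊙
        ((Matrix.of fun i j => B i j ^ k) ⊙ X) := by
    ext i j
    simp [div_pow, hBne, ← mul_assoc]
  rw [hAX]
  exact matMajorizedBy_hadamard (hC.map_pow k) (funext fun i => by simp [hCdiag]) hBX

/-- If `A`, `B` are real symmetric with all `b ij ≠ 0` and the matrix of ratios
`[a ij / b ij]` is a correlation matrix, then for every positive integer `k` and
every symmetric `X`, `A⁽ᵏ⁾ ⊙ X` is majorized by `B⁽ᵏ⁾ ⊙ X` (entrywise k-th powers). -/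
theorem hadamardPow_majorized {n : ℕ} (A B : Matrix (Fin n) (Fin n) ℝ)
    (hA : A.IsHermitian) (hB : B.IsHermitian) (hBne : ∀ i j, B i j ≠ 0)
    (hC : (Matrix.of fun i j => A i j / B i j).PosSemidef)
    (hCdiag : ∀ i, A i i / B i i = 1)
    (k : ℕ) (hk : 0 < k) (X : Matrix (Fin n) (Fin n) ℝ) (hX : X.IsHermitian) :
    MatMajorizedBy ((Matrix.of fun i j => A i j ^ k) ⊙ X)
      ((Matrix.of fun i j => B i j ^ k) ⊙ X) :=
  hadamardPow_majorized_general A B hB hBne hC hCdiag k X hX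
end

section
/- Let A = [a_ij] be an n×n real symmetric positive semidefinite matrix, let D be the diagonal matrix whose diagonal entries are a_11,…,a_nn, and let D^{1/2} be its (entrywise) nonnegative square root. Then for every n×n real symmetric matrix X, the Hadamard product A ∘ X is majorized by D^{1/2} X D^{1/2}. -/
/-!
For a set `s` of indices, the sum of the eigenvalues of `A ∘ X` indexed by `s` is `tr (P (A ∘ X))`
for the spectral projection `P` of `A ∘ X` onto the corresponding eigenvectors, and
`tr (P (A ∘ X)) = tr ((A ∘ P) X)`. Writing `A = D^{1/2} C D^{1/2}` with `C` positive semidefinite of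
unit diagonal turns this into `tr ((C ∘ P) (D^{1/2} X D^{1/2}))`, and by the Schur product theorem
`0 ≤ C ∘ P ≤ C ∘ I = I` with `tr (C ∘ P) = |s|`. Ky Fan's principle bounds `tr (R Y)`, for
`0 ≤ R ≤ I` of trace `k`, by a sum of `k` eigenvalues of `Y`: in an eigenbasis of `Y` the diagonal
of `R` lies in `[0, 1]` and sums to `k`, and a linear functional on that polytope is maximised at a
`0/1` vertex. Taking `P = I` gives equality of the total sums.
-/

open Matrix

open Finset
open scoped ComplexOrder

section Threshold

variable {ι : Type*} [Fintype ι]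

lemma sum_mul_le_sum_of_threshold {c w : ι → ℝ} {t : Finset ι} {μ : ℝ}
    (hc0 : ∀ i, 0 ≤ c i) (hc1 : ∀ i, c i ≤ 1) (hsum : ∑ i, c i = #t)
    (hwt : ∀ i ∈ t, μ ≤ w i) (hwtc : ∀ i ∉ t, w i ≤ μ) :
    ∑ i, c i * w i ≤ ∑ i ∈ t, w i := by
  classical
  -- `∑ i, (1_t i - c i) = 0`, so the threshold `μ` can be subtracted from `w` for free.
  have key : ∑ i ∈ t, w i - ∑ i, c i * w i
      = ∑ i, ((if i ∈ t then 1 else 0) - c i) * (w i - μ) := by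
    simp only [sub_mul, mul_sub, sum_sub_distrib, ite_mul, one_mul, zero_mul,
      sum_ite_mem, univ_inter, ← sum_mul, hsum, sum_const, nsmul_eq_mul]
    ring
  have : 0 ≤ ∑ i, ((if i ∈ t then 1 else 0) - c i) * (w i - μ) := by
    refine sum_nonneg fun i _ => ?_
    by_cases hi : i ∈ t
    · simp only [if_pos hi]
      exact mul_nonneg (sub_nonneg.2 (hc1 i)) (sub_nonneg.2 (hwt i hi))
    · simp only [if_neg hi, zero_sub, neg_mul]
      exact neg_nonneg.2 (mul_nonpos_of_nonneg_of_nonpos (hc0 i) (sub_nonpos.2 (hwtc i hi)))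
  linarith

lemma exists_card_eq_threshold (w : ι → ℝ) {k : ℕ} (hk : k ≤ Fintype.card ι) :
    ∃ t : Finset ι, #t = k ∧ ∃ μ, (∀ i ∈ t, μ ≤ w i) ∧ ∀ i ∉ t, w i ≤ μ := by
  classical
  obtain ⟨t, ht, hmax⟩ := (univ.powersetCard k).exists_max_image (fun t => ∑ i ∈ t, w i)
    (powersetCard_nonempty.2 (by simpa using hk))
  rw [mem_powersetCard_univ] at ht
  refine ⟨t, ht, ?_⟩
  have hswap : ∀ i ∈ t, ∀ j ∉ t, w j ≤ w i := by
    intro i hi j hj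
    have hj' : j ∉ t.erase i := fun h => hj (mem_of_mem_erase h)
    have := hmax (insert j (t.erase i)) (by
      rw [mem_powersetCard_univ, card_insert_of_notMem hj', card_erase_of_mem hi, ← ht]
      have := card_pos.2 ⟨i, hi⟩
      omega)
    rw [sum_insert hj', ← add_sum_erase t w hi] at this
    linarith
  rcases t.eq_empty_or_nonempty with rfl | hne
  · obtain ⟨μ, hμ⟩ := (Set.finite_range w).bddAbove
    exact ⟨μ, by simp, fun i _ => hμ ⟨i, rfl⟩⟩
  · obtain ⟨i₀, hi₀, hμ⟩ := exists_mem_eq_inf' hne w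
    exact ⟨t.inf' hne w, fun i hi => inf'_le w hi, fun j hj => hμ ▸ hswap i₀ hi₀ j hj⟩

lemma exists_card_eq_sum_mul_le {c : ι → ℝ} (w : ι → ℝ) {k : ℕ}
    (hc0 : ∀ i, 0 ≤ c i) (hc1 : ∀ i, c i ≤ 1) (hsum : ∑ i, c i = k) :
    ∃ t : Finset ι, #t = k ∧ ∑ i, c i * w i ≤ ∑ i ∈ t, w i := by
  have hk : k ≤ Fintype.card ι := by
    have := Finset.sum_le_sum fun i (_ : i ∈ univ) => hc1 i
    rw [hsum, sum_const, card_univ, nsmul_one] at this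
    exact_mod_cast this
  obtain ⟨t, rfl, μ, hwt, hwtc⟩ := exists_card_eq_threshold w hk
  exact ⟨t, rfl, sum_mul_le_sum_of_threshold hc0 hc1 hsum hwt hwtc⟩

end Threshold

lemma Matrix.hadamard_sub {m n α : Type*} [NonUnitalNonAssocRing α] (A B C : Matrix m n α) :
    A ⊙ (B - C) = A ⊙ B - A ⊙ C := by
  ext i j
  simp only [Matrix.sub_apply, hadamard_apply, mul_sub]

section Hadamard

variable {ι : Type*} [Fintype ι] {α : Type*} [CommSemiring α]

lemma Matrix.trace_mul_hadamard (P A X : Matrix ι ι α) :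
    (P * (A ⊙ X)).trace = ((Aᵀ ⊙ P) * X).trace := by
  simp only [trace, diag, mul_apply, hadamard_apply, transpose_apply]
  refine sum_congr rfl fun i _ => sum_congr rfl fun j _ => ?_
  ring

variable [DecidableEq ι]

lemma Matrix.diagonal_mul_mul_diagonal_hadamard (d e : ι → α) (C P : Matrix ι ι α) :
    (diagonal d * C * diagonal e) ⊙ P = diagonal d * (C ⊙ P) * diagonal e := by
  ext i j
  simp only [hadamard_apply, mul_diagonal, diagonal_mul]
  ring

lemma Matrix.trace_mul_hadamard_of_eq_diagonal_mul_mul {A C : Matrix ι ι α} {d : ι → α}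
    (hA : Aᵀ = A) (hAC : A = diagonal d * C * diagonal d) (P X : Matrix ι ι α) :
    (P * (A ⊙ X)).trace = ((C ⊙ P) * (diagonal d * X * diagonal d)).trace := by
  rw [trace_mul_hadamard, hA, hAC, diagonal_mul_mul_diagonal_hadamard]
  simp only [mul_assoc]
  rw [trace_mul_comm]
  simp only [mul_assoc]

end Hadamard

section PosSemidef

variable {ι : Type*} [Fintype ι] [DecidableEq ι]

lemma Matrix.PosSemidef.apply_eq_zero_of_diag_eq_zero {𝕜 : Type*} [RCLike 𝕜] {A : Matrix ι ι 𝕜}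
    (hA : A.PosSemidef) {i : ι} (hi : A i i = 0) (j : ι) : A j i = 0 := by
  have h := (hA.dotProduct_mulVec_zero_iff (Pi.single i 1)).1 (by simpa using hi)
  simpa using congrFun h j

lemma Matrix.PosSemidef.exists_diag_eq_one_eq_diagonal_sqrt_mul_mul {A : Matrix ι ι ℝ}
    (hA : A.PosSemidef) :
    ∃ C : Matrix ι ι ℝ, C.PosSemidef ∧ C.diag = 1 ∧
      A = diagonal (fun i => √(A i i)) * C * diagonal (fun i => √(A i i)) := by
  classical
  -- Where `A i i = 0` the inverse square root is Lean's `0⁻¹ = 0`; `Z` restores the unit diagonal.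
  set S := diagonal fun i => (√(A i i))⁻¹
  set Z := diagonal fun i => if A i i = 0 then (1 : ℝ) else 0
  have hZ : Z.PosSemidef := PosSemidef.diagonal fun i => by dsimp only; split <;> norm_num
  have hsqrt : ∀ i, A i i ≠ 0 → √(A i i) * (√(A i i))⁻¹ = 1 := fun i hi =>
    mul_inv_cancel₀ (Real.sqrt_ne_zero'.2 (hA.diag_nonneg.lt_of_ne' hi))
  have hcol : ∀ i j, A i j * (√(A j j))⁻¹ * √(A j j) = A i j := fun i j => by
    by_cases hj : A j j = 0
    · simp [hj, hA.apply_eq_zero_of_diag_eq_zero hj i]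
    · rw [mul_assoc, mul_comm _ √(A j j), hsqrt j hj, mul_one]
  have hrow : ∀ i j, √(A i i) * (√(A i i))⁻¹ * A i j = A i j := fun i j => by
    have hsymm : A j i = A i j := by simpa using hA.isHermitian.apply i j
    rw [← hsymm]
    linear_combination hcol j i
  refine ⟨S * A * S + Z, ?_, ?_, ?_⟩
  · have := hA.conjTranspose_mul_mul_same S
    rw [diagonal_conjTranspose] at this
    exact (by simpa using this : (S * A * S).PosSemidef).add hZ
  · ext i
    by_cases hi : A i i = 0
    · simp [S, Z, hi, mul_diagonal, diagonal_mul]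
    · simp only [diag_apply, add_apply, mul_diagonal, diagonal_mul, S, Z, diagonal_apply_eq,
        if_neg hi, add_zero, Pi.one_apply]
      field_simp
      rw [Real.sq_sqrt hA.diag_nonneg, div_self hi]
  · ext i j
    have hZij :
        diagonal (fun i => √(A i i)) i j * (if A j j = 0 then 1 else 0) * √(A j j) = 0 := by
      by_cases hj : A j j = 0 <;> simp [diagonal_apply, hj]
    simp only [add_apply, mul_add, add_mul, mul_diagonal, diagonal_mul, S, Z, hZij, add_zero]
    rw [show √(A i i) * ((√(A i i))⁻¹ * A i j * (√(A j j))⁻¹) * √(A j j)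
      = √(A i i) * (√(A i i))⁻¹ * A i j * (√(A j j))⁻¹ * √(A j j) by ring, hrow, hcol]

end PosSemidef

section Spectral

variable {ι : Type*} [Fintype ι] [DecidableEq ι]

lemma Matrix.IsHermitian.trace_mul_eq_sum_diag_mul_eigenvalues_s9 {M : Matrix ι ι ℝ}
    (hM : M.IsHermitian) (R : Matrix ι ι ℝ) :
    (R * M).trace = ∑ j, (star (hM.eigenvectorUnitary : Matrix ι ι ℝ) * R *
      hM.eigenvectorUnitary) j j * hM.eigenvalues j := by
  set U : Matrix ι ι ℝ := (hM.eigenvectorUnitary : Matrix ι ι ℝ)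
  have hUU : U * star U = 1 := Unitary.coe_mul_star_self _
  have hdiag : star U * M * U = diagonal hM.eigenvalues := by
    simpa [Unitary.conjStarAlgAut_star_apply] using hM.conjStarAlgAut_star_eigenvectorUnitary
  calc (R * M).trace = (star U * R * U * (star U * M * U)).trace := by
        rw [show star U * R * U * (star U * M * U) = star U * (R * (U * star U) * M) * U by
          noncomm_ring, hUU, mul_one, trace_mul_cycle, hUU, one_mul]
    _ = _ := by rw [hdiag, trace]; simp [mul_diagonal]

lemma Matrix.IsHermitian.exists_card_eq_trace_mul_le {M R : Matrix ι ι ℝ} (hM : M.IsHermitian)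
    (hR : R.PosSemidef) (hR1 : (1 - R).PosSemidef) {k : ℕ} (htr : R.trace = k) :
    ∃ t : Finset ι, #t = k ∧ (R * M).trace ≤ ∑ i ∈ t, hM.eigenvalues i := by
  set U : Matrix ι ι ℝ := (hM.eigenvectorUnitary : Matrix ι ι ℝ)
  have hUU : star U * U = 1 := Unitary.coe_star_mul_self _
  have hUU' : U * star U = 1 := Unitary.coe_mul_star_self _
  have hc0 : ∀ j, 0 ≤ (star U * R * U) j j := fun j =>
    (hR.conjTranspose_mul_mul_same U).diag_nonneg
  have hc1 : ∀ j, (star U * R * U) j j ≤ 1 := fun j => by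
    have h := (hR1.conjTranspose_mul_mul_same U).diag_nonneg (i := j)
    rw [← star_eq_conjTranspose, mul_sub, sub_mul, mul_one, hUU] at h
    simpa using h
  have hsum : ∑ j, (star U * R * U) j j = k := by
    show (star U * R * U).trace = k
    rw [← htr, trace_mul_cycle, hUU', one_mul]
  rw [hM.trace_mul_eq_sum_diag_mul_eigenvalues_s9]
  exact exists_card_eq_sum_mul_le _ hc0 hc1 hsum

lemma Matrix.IsHermitian.exists_posSemidef_trace_mul_eq_sum {M : Matrix ι ι ℝ}
    (hM : M.IsHermitian) (s : Finset ι) :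
    ∃ P : Matrix ι ι ℝ, P.PosSemidef ∧ (1 - P).PosSemidef ∧ P.trace = #s ∧
      (P * M).trace = ∑ i ∈ s, hM.eigenvalues i := by
  have htrace := hM.trace_mul_eq_sum_diag_mul_eigenvalues_s9
  set U : Matrix ι ι ℝ := (hM.eigenvectorUnitary : Matrix ι ι ℝ)
  have hUU : star U * U = 1 := Unitary.coe_star_mul_self _
  have hUU' : U * star U = 1 := Unitary.coe_mul_star_self _
  set e : ι → ℝ := fun i => if i ∈ s then 1 else 0
  have he0 : 0 ≤ e := fun i => by by_cases i ∈ s <;> simp [e, *]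
  have he1 : 0 ≤ 1 - e := fun i => by by_cases i ∈ s <;> simp [e, *]
  refine ⟨U * diagonal e * star U, ?_, ?_, ?_, ?_⟩
  · exact (PosSemidef.diagonal he0).mul_mul_conjTranspose_same U
  · have h1e : diagonal (1 - e) = 1 - diagonal e := by rw [← diagonal_one, diagonal_sub]; rfl
    have := (PosSemidef.diagonal he1).mul_mul_conjTranspose_same U
    rwa [← star_eq_conjTranspose, h1e, mul_sub, sub_mul, mul_one, hUU'] at this
  · rw [trace_mul_cycle, hUU, one_mul, trace_diagonal]
    simp [e]
  · rw [htrace]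
    have : star U * (U * diagonal e * star U) * U = diagonal e := by
      rw [show star U * (U * diagonal e * star U) * U = (star U * U) * diagonal e * (star U * U) by
        noncomm_ring, hUU, one_mul, mul_one]
    simp only [this, diagonal_apply_eq, e, ite_mul, one_mul, zero_mul, sum_ite_mem, univ_inter]

end Spectral

/-- For a real symmetric positive semidefinite `A` and `D^{1/2}` the diagonal matrix with
entries `√(a i i)`, the Hadamard product `A ⊙ X` is majorized by `D^{1/2} * X * D^{1/2}`
for every symmetric `X`. -/
theorem hadamard_majorized_diagSqrt_conj {n : ℕ}
    (A X : Matrix (Fin n) (Fin n) ℝ) (hA : A.PosSemidef) (hX : X.IsHermitian) :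
    MatMajorizedBy (A ⊙ X)
      (Matrix.diagonal (fun i => Real.sqrt (A i i)) * X *
        Matrix.diagonal (fun i => Real.sqrt (A i i))) := by
  obtain ⟨C, hC, hCdiag, hAC⟩ := hA.exists_diag_eq_one_eq_diagonal_sqrt_mul_mul
  set D := diagonal fun i => √(A i i)
  have hCone : C ⊙ 1 = 1 := hadamard_one_eq_one_iff.2 hCdiag
  have htrace : ∀ P, (P * (A ⊙ X)).trace = ((C ⊙ P) * (D * X * D)).trace := fun P =>
    trace_mul_hadamard_of_eq_diagonal_mul_mul
      (by rw [← conjTranspose_eq_transpose_of_trivial, hA.isHermitian.eq]) hAC P X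
  have hAX := hA.isHermitian.hadamard hX
  have hDXD : (D * X * D).IsHermitian := by
    simpa [D] using isHermitian_mul_mul_conjTranspose D hX
  refine ⟨hAX, hDXD, fun s => ?_, ?_⟩
  · obtain ⟨P, hP, hP1, htrP, hPsum⟩ := hAX.exists_posSemidef_trace_mul_eq_sum s
    have hCP1 : (1 - C ⊙ P).PosSemidef := by
      rw [← hCone, ← hadamard_sub]
      exact hC.hadamard hP1
    have htrCP : (C ⊙ P).trace = #s := by
      rw [← htrP]
      simp [trace, show ∀ i, C i i = 1 from congrFun hCdiag]
    obtain ⟨t, ht, hle⟩ := hDXD.exists_card_eq_trace_mul_le (hC.hadamard hP) hCP1 htrCP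
    exact ⟨t, ht, hPsum ▸ (htrace P).symm ▸ hle⟩
  · have := htrace 1
    rw [one_mul, hCone, one_mul, hAX.trace_eq_sum_eigenvalues,
      hDXD.trace_eq_sum_eigenvalues] at this
    simpa using this
end

section
/- Let A = [a_ij] and X = [x_ij] be n×n real symmetric positive semidefinite matrices. Then (a_11 a_22 ⋯ a_nn) · det(X) ≤ det(A ∘ X) ≤ (a_11 a_22 ⋯ a_nn) · (x_11 x_22 ⋯ x_nn), where A ∘ X is the Hadamard product. -/
/-!
Hadamard's inequality `det M ≤ ∏ M i i` is the case `A = 1` of the lower bound; applied to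
`A ⊙ X`, which is positive semidefinite by the Schur product theorem, it gives the upper bound.

The lower bound goes by induction on `n`. For `X` positive definite with leading principal
submatrix `X₁`, the number `s = det X / det X₁` is the Schur complement of `X₁` in `X`, so
subtracting `s` from the last diagonal entry of `X` leaves a positive semidefinite matrix `X̃`.
The determinant is affine in a single diagonal entry, whence
`det (A ⊙ X) = det (A ⊙ X̃) + aₙₙ s det (A₁ ⊙ X₁) ≥ aₙₙ s (∏ aᵢᵢ) det X₁ = (∏ aᵢᵢ) det X`,
by the Schur product theorem for the first term and induction for the second.
-/

open Matrix

namespace Matrix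

theorem hadamard_single {m n α : Type*} [DecidableEq m] [DecidableEq n] [MulZeroClass α]
    (A : Matrix m n α) (i : m) (j : n) (c : α) :
    A ⊙ single i j c = single i j (A i j * c) := by
  ext i' j'
  by_cases h : i = i' ∧ j = j'
  · obtain ⟨rfl, rfl⟩ := h
    simp
  · simp [single_apply_of_ne (h := h)]

section DiagonalUpdate

variable {R : Type*} [CommRing R] {n : ℕ}

theorem det_add_single_self (M : Matrix (Fin (n + 1)) (Fin (n + 1)) R) (k : Fin (n + 1)) (c : R) :
    (M + single k k c).det = M.det + c * (M.submatrix k.succAbove k.succAbove).det := by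
  have hrow : M + single k k c = M.updateRow k (M k + Pi.single k c) := by
    ext i j
    simp only [add_apply, single_apply, updateRow_apply, Pi.add_apply, Pi.single_apply]
    grind
  have hexpand : (M.updateRow k (Pi.single k c)).det =
      c * (M.submatrix k.succAbove k.succAbove).det := by
    rw [det_succ_row _ k, Finset.sum_eq_single k (fun j _ hj => by simp [hj]) (by simp)]
    simp [← two_mul, pow_mul]
  rw [hrow, det_updateRow_add, updateRow_eq_self, hexpand]

theorem det_hadamard_add_single_self (A X : Matrix (Fin (n + 1)) (Fin (n + 1)) R)
    (k : Fin (n + 1)) (c : R) :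
    (A ⊙ (X + single k k c)).det = (A ⊙ X).det +
      A k k * c * (A.submatrix k.succAbove k.succAbove ⊙ X.submatrix k.succAbove k.succAbove).det := by
  rw [hadamard_add, hadamard_single, det_add_single_self, submatrix_hadamard]

end DiagonalUpdate

theorem PosDef.posSemidef_sub_single_last {n : ℕ} {X : Matrix (Fin (n + 1)) (Fin (n + 1)) ℝ}
    (hX : X.PosDef) :
    (X - single (Fin.last n) (Fin.last n)
      (X.det / (X.submatrix Fin.castSucc Fin.castSucc).det)).PosSemidef := by
  set e : Fin n ⊕ Fin 1 ≃ Fin (n + 1) := finSumFinEquiv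
  set Y := X.submatrix e e
  set X₁ := Y.toBlocks₁₁
  set b := Y.toBlocks₁₂
  set S := Y.toBlocks₂₂ - bᴴ * X₁⁻¹ * b
  have hX₁ : X₁.PosDef := hX.submatrix (Fin.castSucc_injective n)
  have := hX₁.isUnit.invertible
  have hY : Y = fromBlocks X₁ b bᴴ Y.toBlocks₂₂ := by
    conv_lhs => rw [← fromBlocks_toBlocks Y]
    congr
    ext i j
    exact (hX.isHermitian.apply (e (Sum.inr i)) (e (Sum.inl j))).symm
  have hschur : X.det = X₁.det * S 0 0 := by
    rw [← det_submatrix_equiv_self e, ← det_fin_one S]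
    change Y.det = _
    rw [hY, det_fromBlocks₁₁, invOf_eq_nonsing_inv]
  have hs : X.det / X₁.det = S 0 0 := by
    rw [hschur, mul_div_cancel_left₀ _ hX₁.det_pos.ne']
  change (X - single (Fin.last n) (Fin.last n) (X.det / X₁.det)).PosSemidef
  rw [hs, ← posSemidef_submatrix_equiv e]
  have hblocks : (X - single (Fin.last n) (Fin.last n) (S 0 0)).submatrix e e =
      fromBlocks X₁ b bᴴ (bᴴ * X₁⁻¹ * b) := by
    change Y - (single (Fin.last n) (Fin.last n) (S 0 0)).submatrix e e = _
    rw [hY]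
    ext (i | i) (j | j) <;> simp [S, e, Fin.fin_one_eq_zero]
  rw [hblocks, PosDef.fromBlocks₁₁ _ _ hX₁, sub_self]
  exact PosSemidef.zero

theorem PosSemidef.prod_diag_mul_det_le_det_hadamard :
    ∀ {n : ℕ} {A X : Matrix (Fin n) (Fin n) ℝ}, A.PosSemidef → X.PosSemidef →
      (∏ i, A i i) * X.det ≤ (A ⊙ X).det
  | 0, _, _, _, _ => by simp
  | n + 1, A, X, hA, hX => by
    by_cases hXpd : ¬X.PosDef
    · rw [hX.posDef_iff_det_ne_zero, not_not] at hXpd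
      rw [hXpd, mul_zero]
      exact (hA.hadamard hX).det_nonneg
    rw [not_not] at hXpd
    set a := A (Fin.last n) (Fin.last n)
    set A₁ := A.submatrix Fin.castSucc Fin.castSucc
    set X₁ := X.submatrix Fin.castSucc Fin.castSucc
    set s := X.det / X₁.det
    set X' := X - single (Fin.last n) (Fin.last n) s
    have hX₁ : X₁.PosDef := hXpd.submatrix (Fin.castSucc_injective n)
    have hs : 0 ≤ s := div_nonneg hXpd.det_pos.le hX₁.det_pos.le
    have hXdet : X.det = s * X₁.det := (div_mul_cancel₀ _ hX₁.det_pos.ne').symm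
    have hX'₁ : X'.submatrix Fin.castSucc Fin.castSucc = X₁ := by
      ext i j
      simp [X', X₁, single_apply_of_row_ne (Fin.castSucc_ne_last i).symm]
    have hdet : (A ⊙ X).det = (A ⊙ X').det + a * s * (A₁ ⊙ X₁).det := by
      have := det_hadamard_add_single_self A X' (Fin.last n) s
      rwa [sub_add_cancel, Fin.succAbove_last, hX'₁] at this
    have hprod : ∏ i, A i i = (∏ i, A₁ i i) * a := Fin.prod_univ_castSucc _
    have hind := prod_diag_mul_det_le_det_hadamard (hA.submatrix Fin.castSucc) hX₁.posSemidef
    calc (∏ i, A i i) * X.det = a * s * ((∏ i, A₁ i i) * X₁.det) := by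
          rw [hprod, hXdet]; ring
      _ ≤ a * s * (A₁ ⊙ X₁).det := by
          gcongr
          exact mul_nonneg hA.diag_nonneg hs
      _ ≤ (A ⊙ X).det := by
          rw [hdet]
          exact le_add_of_nonneg_left (hA.hadamard hXpd.posSemidef_sub_single_last).det_nonneg

theorem PosSemidef.det_le_prod_diag {n : ℕ} {M : Matrix (Fin n) (Fin n) ℝ}
    (hM : M.PosSemidef) : M.det ≤ ∏ i, M i i := by
  simpa [one_hadamard, det_diagonal] using PosSemidef.one.prod_diag_mul_det_le_det_hadamard hM

end Matrix

/-- Oppenheim inequality: for real symmetric positive semidefinite `A` and `X`,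
`(∏ i, a i i) * det X ≤ det (A ⊙ X) ≤ (∏ i, a i i) * (∏ i, x i i)`. -/
theorem oppenheim_inequality {n : ℕ} (A X : Matrix (Fin n) (Fin n) ℝ)
    (hA : A.PosSemidef) (hX : X.PosSemidef) :
    (∏ i, A i i) * X.det ≤ (A ⊙ X).det ∧
      (A ⊙ X).det ≤ (∏ i, A i i) * ∏ i, X i i := by
  refine ⟨hA.prod_diag_mul_det_le_det_hadamard hX, ?_⟩
  calc (A ⊙ X).det ≤ ∏ i, (A ⊙ X) i i := (hA.hadamard hX).det_le_prod_diag
    _ = (∏ i, A i i) * ∏ i, X i i := by simp only [hadamard_apply, Finset.prod_mul_distrib]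
end

section
/- Let X = [x_ij] be an n×n real symmetric matrix. Then the vector (x_11, x_22, …, x_nn) of diagonal entries of X is majorized by the vector of eigenvalues of X (with multiplicity). -/
open Matrix

/-- If `0 ≤ c j ≤ 1` and `∑ c = k`, then `∑ c j * lam j` is at most the sum of `lam`
over some subset of cardinality `k` (namely a maximizing one). -/
lemma exists_topk_sum_le {n : ℕ} (lam c : Fin n → ℝ)
    (h0 : ∀ j, 0 ≤ c j) (h1 : ∀ j, c j ≤ 1) (k : ℕ) (hk : k ≤ n)
    (hsum : ∑ j, c j = k) :
    ∃ t : Finset (Fin n), t.card = k ∧ ∑ j, c j * lam j ≤ ∑ j ∈ t, lam j := by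
  rcases Nat.eq_zero_or_pos k with hk0 | hkpos
  · subst hk0
    refine ⟨∅, rfl, ?_⟩
    have hc0 : ∀ j ∈ Finset.univ, c j = 0 := by
      rw [← Finset.sum_eq_zero_iff_of_nonneg (fun j _ => h0 j)]
      simpa using hsum
    have : ∀ j ∈ Finset.univ, c j * lam j = 0 := fun j hj => by rw [hc0 j hj, zero_mul]
    simp [Finset.sum_congr rfl this]
  · -- choose t maximizing the sum among card-k subsets
    have hne : (Finset.univ.powersetCard k : Finset (Finset (Fin n))).Nonempty := by
      rw [Finset.powersetCard_nonempty]
      simpa using hk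
    obtain ⟨t, htmem, htmax⟩ := Finset.exists_max_image _ (fun t => ∑ j ∈ t, lam j) hne
    rw [Finset.mem_powersetCard] at htmem
    have htcard : t.card = k := htmem.2
    have htne : t.Nonempty := Finset.card_pos.mp (htcard ▸ hkpos)
    set m := t.inf' htne lam with hm
    have hmem_ge : ∀ j ∈ t, m ≤ lam j := fun j hj => Finset.inf'_le _ hj
    have hout_le : ∀ j, j ∉ t → lam j ≤ m := by
      intro j hj
      obtain ⟨j0, hj0, hj0m⟩ := Finset.exists_mem_eq_inf' htne lam
      have h' : ∑ i ∈ insert j (t.erase j0), lam i ≤ ∑ i ∈ t, lam i := by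
        apply htmax
        rw [Finset.mem_powersetCard]
        refine ⟨Finset.subset_univ _, ?_⟩
        rw [Finset.card_insert_of_notMem (fun h => hj (Finset.erase_subset _ _ h)),
          Finset.card_erase_of_mem hj0, htcard]
        omega
      rw [Finset.sum_insert (fun h => hj (Finset.erase_subset _ _ h)),
        Finset.sum_erase_eq_sub hj0] at h'
      rw [hj0m] at hm
      linarith [hm]
    refine ⟨t, htcard, ?_⟩
    have hsplit : ∑ j, c j * lam j = ∑ j ∈ t, c j * lam j + ∑ j ∈ tᶜ, c j * lam j :=
      (Finset.sum_add_sum_compl t _).symm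
    have h1' : ∑ j ∈ tᶜ, c j * lam j ≤ (∑ j ∈ tᶜ, c j) * m := by
      rw [Finset.sum_mul]
      refine Finset.sum_le_sum fun j hj => ?_
      exact mul_le_mul_of_nonneg_left (hout_le j (Finset.mem_compl.mp hj)) (h0 j)
    have h2' : (∑ j ∈ t, (1 - c j)) * m ≤ ∑ j ∈ t, (1 - c j) * lam j := by
      rw [Finset.sum_mul]
      refine Finset.sum_le_sum fun j hj => ?_
      exact mul_le_mul_of_nonneg_left (hmem_ge j hj) (by linarith [h1 j])
    have hcsum : ∑ j ∈ tᶜ, c j = ∑ j ∈ t, (1 - c j) := by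
      have h := Finset.sum_add_sum_compl t c
      rw [Finset.sum_sub_distrib, Finset.sum_const, htcard, nsmul_eq_mul, mul_one]
      rw [← h] at hsum
      linarith [hsum]
    have h3' : ∑ j ∈ t, (1 - c j) * lam j = ∑ j ∈ t, lam j - ∑ j ∈ t, c j * lam j := by
      rw [← Finset.sum_sub_distrib]; congr 1; ext j; ring
    rw [hcsum] at h1'
    linarith [h1', h2', hsplit, h3']

/-- Schur's majorization inequality: the diagonal of a real symmetric matrix is majorized
by its eigenvalue vector. -/
theorem schur_diag_majorized_eigenvalues {n : ℕ}
    (X : Matrix (Fin n) (Fin n) ℝ) (hX : X.IsHermitian) :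
    VecMajorizedBy (fun i => X i i) hX.eigenvalues := by
  set U : Matrix (Fin n) (Fin n) ℝ := hX.eigenvectorUnitary.1 with hU
  set lam := hX.eigenvalues with hlam
  have hdiag : ∀ i, X i i = ∑ j, U i j * lam j * U i j := by
    intro i
    conv_lhs => rw [hX.spectral_theorem]
    simp [hU, hlam, mul_apply, diagonal, Finset.sum_mul, mul_comm]
  have hrow : ∀ i, ∑ j, U i j * U i j = 1 := by
    intro i
    have h := (Matrix.mem_unitaryGroup_iff).mp hX.eigenvectorUnitary.2
    have := congrArg (fun M => M i i) h
    simpa [hU, mul_apply] using this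
  have hcol : ∀ j, ∑ i, U i j * U i j = 1 := by
    intro j
    have h := (Matrix.mem_unitaryGroup_iff').mp hX.eigenvectorUnitary.2
    have := congrArg (fun M => M j j) h
    simpa [hU, mul_apply] using this
  constructor
  · intro s
    set c : Fin n → ℝ := fun j => ∑ i ∈ s, U i j * U i j with hc
    have hc0 : ∀ j, 0 ≤ c j := fun j =>
      Finset.sum_nonneg fun i _ => mul_self_nonneg _
    have hc1 : ∀ j, c j ≤ 1 := by
      intro j
      calc c j ≤ ∑ i, U i j * U i j :=
            Finset.sum_le_sum_of_subset_of_nonneg (Finset.subset_univ s)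
              (fun i _ _ => mul_self_nonneg _)
        _ = 1 := hcol j
    have hcsum : ∑ j, c j = (s.card : ℝ) := by
      rw [Finset.sum_comm]
      rw [Finset.sum_congr rfl (fun i _ => hrow i)]
      simp
    obtain ⟨t, htc, ht⟩ := exists_topk_sum_le lam c hc0 hc1 s.card
      (by simpa using Finset.card_le_card (Finset.subset_univ s)) hcsum
    refine ⟨t, htc, ?_⟩
    calc ∑ i ∈ s, X i i = ∑ i ∈ s, ∑ j, U i j * lam j * U i j :=
          Finset.sum_congr rfl fun i _ => hdiag i
      _ = ∑ j, c j * lam j := by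
          rw [Finset.sum_comm]
          refine Finset.sum_congr rfl fun j _ => ?_
          rw [hc, Finset.sum_mul]
          exact Finset.sum_congr rfl fun i _ => by ring
      _ ≤ ∑ j ∈ t, lam j := ht
  · calc ∑ i, X i i = ∑ i, ∑ j, U i j * lam j * U i j :=
          Finset.sum_congr rfl fun i _ => hdiag i
      _ = ∑ j, (∑ i, U i j * U i j) * lam j := by
          rw [Finset.sum_comm]
          refine Finset.sum_congr rfl fun j _ => ?_
          rw [Finset.sum_mul]
          exact Finset.sum_congr rfl fun i _ => by ring
      _ = ∑ j, lam j := by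
          refine Finset.sum_congr rfl fun j _ => ?_
          rw [hcol j, one_mul]
end

section
/- Let A be an n×n real symmetric matrix and let |A| denote the unique positive semidefinite square root of A². Then for every n×n real symmetric matrix X, the matrix AXA is majorized by |A| X |A|. -/
open Matrix

/-! Diagonalize `A`. Its sign `S = sgn A` (with `sgn 0 = 1`) is an involution commuting with
`|A|` and `A = S |A| = |A| S`, so `A X A = S (|A| X |A|) S` is similar to `|A| X |A|`. The two
matrices therefore have the same characteristic polynomial, hence the same eigenvalues, and the
majorization holds with equality. The given `B` is `|A|` by uniqueness of positive semidefinite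
square roots. -/

namespace Matrix

theorem charpoly_mul_mul_of_mul_self_eq_one {n R : Type*} [Fintype n] [DecidableEq n]
    [CommRing R] {S : Matrix n n R} (hS : S * S = 1) (M : Matrix n n R) :
    (S * M * S).charpoly = M.charpoly := by
  rw [Matrix.mul_assoc, charpoly_mul_comm, Matrix.mul_assoc, hS, Matrix.mul_one]

namespace IsHermitian

variable {n 𝕜 : Type*} [Fintype n] [DecidableEq n] [RCLike 𝕜] {A : Matrix n n 𝕜}

theorem cfc_mul (hA : A.IsHermitian) (f g : ℝ → ℝ) :
    hA.cfc (fun x => f x * g x) = hA.cfc f * hA.cfc g := by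
  rw [IsHermitian.cfc, IsHermitian.cfc, IsHermitian.cfc, ← map_mul, diagonal_mul_diagonal]
  congr 2
  ext i
  simp

theorem cfc_id_eq (hA : A.IsHermitian) : hA.cfc (fun x => x) = A := by
  rw [← hA.cfc_eq, cfc_id' ℝ A hA.isSelfAdjoint]

theorem cfc_one (hA : A.IsHermitian) : hA.cfc (fun _ => 1) = 1 := by
  rw [← hA.cfc_eq, cfc_const_one ℝ A]

theorem exists_mul_self_eq_one_mul_cfc_abs (hA : A.IsHermitian) :
    ∃ S : Matrix n n 𝕜, S * S = 1 ∧ S * hA.cfc (fun x : ℝ => |x|) = A ∧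
      hA.cfc (fun x : ℝ => |x|) * S = A := by
  set sgn : ℝ → ℝ := fun x => if 0 ≤ x then 1 else -1
  have sgn_mul_self (x : ℝ) : sgn x * sgn x = 1 := by simp only [sgn]; split_ifs <;> norm_num
  have sgn_mul_abs (x : ℝ) : sgn x * |x| = x := by
    simp only [sgn]
    split_ifs with h
    · simp [abs_of_nonneg h]
    · simp [abs_of_neg (not_le.1 h)]
  refine ⟨hA.cfc sgn, ?_, ?_, ?_⟩
  · rw [← cfc_mul, ← hA.cfc_one]
    simp only [sgn_mul_self]
  · simpa only [← cfc_mul, sgn_mul_abs] using hA.cfc_id_eq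
  · simpa only [← cfc_mul, mul_comm |_|, sgn_mul_abs] using hA.cfc_id_eq

open scoped ComplexOrder MatrixOrder in
theorem eq_cfc_abs_of_mul_self_eq_sq (hA : A.IsHermitian) {B : Matrix n n 𝕜}
    (hB : B.PosSemidef) (hB2 : B * B = A ^ 2) : B = hA.cfc fun x : ℝ => |x| := by
  have hAbs : CFC.abs A = B := by
    rw [CFC.abs, hA.isSelfAdjoint.star_eq, ← sq, ← hB2]
    exact CFC.sqrt_mul_self B hB.nonneg
  rw [← hAbs, CFC.abs_eq_cfc_norm A hA.isSelfAdjoint, hA.cfc_eq]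
  simp [Real.norm_eq_abs]

end IsHermitian

end Matrix

theorem VecMajorizedBy.refl {ι : Type*} [Fintype ι] (v : ι → ℝ) : VecMajorizedBy v v :=
  ⟨fun s => ⟨s, rfl, le_rfl⟩, rfl⟩

theorem MatMajorizedBy.of_charpoly_eq {ι : Type*} [Fintype ι] [DecidableEq ι]
    {X Y : Matrix ι ι ℝ} (hX : X.IsHermitian) (hY : Y.IsHermitian)
    (h : X.charpoly = Y.charpoly) : MatMajorizedBy X Y :=
  ⟨hX, hY, (hX.eigenvalues_eq_eigenvalues_iff hY).2 h ▸ VecMajorizedBy.refl _⟩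

/-- For a real symmetric `A` with `|A|` the (unique) positive semidefinite square root of
`A²`, the matrix `A * X * A` is majorized by `|A| * X * |A|` for every symmetric `X`. -/
theorem quadratic_majorized_absQuadratic {n : ℕ}
    (A X : Matrix (Fin n) (Fin n) ℝ) (hA : A.IsHermitian) (hX : X.IsHermitian)
    (B : Matrix (Fin n) (Fin n) ℝ) (hB : B.PosSemidef) (hB2 : B * B = A ^ 2) :
    MatMajorizedBy (A * X * A) (B * X * B) := by
  obtain ⟨S, hSS, hSB, hBS⟩ := hA.exists_mul_self_eq_one_mul_cfc_abs
  rw [← hA.eq_cfc_abs_of_mul_self_eq_sq hB hB2] at hSB hBS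
  have hconj : A * X * A = S * (B * X * B) * S := calc
    A * X * A = S * B * X * (B * S) := by rw [hSB, hBS]
    _ = S * (B * X * B) * S := by simp only [Matrix.mul_assoc]
  refine MatMajorizedBy.of_charpoly_eq ?_ ?_ (hconj ▸ charpoly_mul_mul_of_mul_self_eq_one hSS _)
  · simpa only [hA.eq] using isHermitian_mul_mul_conjTranspose A hX
  · simpa only [hB.isHermitian.eq] using isHermitian_mul_mul_conjTranspose B hX
end

section
/- Let A = [a_ij] be an n×n real symmetric positive semidefinite matrix all of whose diagonal entries a_ii are positive, and let X be an n×n real symmetric positive definite matrix. Then the Hadamard product A ∘ X is positive definite. -/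
/-!
Since `X` is positive definite, `X - ε • 1` is positive semidefinite for some `ε > 0`.
Then `A ⊙ X = A ⊙ (X - ε • 1) + ε • diagonal A.diag`: the first summand is positive
semidefinite by the Schur product theorem, and the second is positive definite because the
diagonal of `A` is positive.
-/

open Matrix
open scoped ComplexOrder

namespace Matrix

variable {𝕜 n : Type*} [RCLike 𝕜] [Fintype n] [DecidableEq n]

theorem PosDef.exists_pos_posSemidef_sub_smul_one {X : Matrix n n 𝕜} (hX : X.PosDef) :
    ∃ ε > (0 : ℝ), (X - ε • 1).PosSemidef := by
  open scoped MatrixOrder in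
  cases subsingleton_or_nontrivial (Matrix n n 𝕜)
  · exact ⟨1, one_pos, Subsingleton.elim (X - _) 0 ▸ PosSemidef.zero⟩
  obtain ⟨ε, hε, hεX⟩ := (CFC.exists_pos_algebraMap_le_iff hX.isHermitian).2
    fun _ ↦ hX.isStrictlyPositive.spectrum_pos
  exact ⟨ε, hε, by rwa [← Algebra.algebraMap_eq_smul_one, ← le_iff]⟩

theorem PosSemidef.hadamard_posDef_of_diag_pos {A X : Matrix n n 𝕜} (hA : A.PosSemidef)
    (hAdiag : ∀ i, 0 < A i i) (hX : X.PosDef) : (A ⊙ X).PosDef := by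
  obtain ⟨ε, hε, hXε⟩ := hX.exists_pos_posSemidef_sub_smul_one
  have hsplit : A ⊙ X = A ⊙ (X - ε • 1) + ε • diagonal A.diag := by
    rw [← hadamard_one, ← hadamard_smul, ← hadamard_add, sub_add_cancel]
  rw [hsplit]
  exact PosDef.posSemidef_add (hA.hadamard hXε) <| (posDef_diagonal_iff.2 hAdiag).smul hε

end Matrix

/-- If `A` is real symmetric positive semidefinite with positive diagonal entries and `X`
is real symmetric positive definite, then the Hadamard product `A ⊙ X` is positive
definite. -/
theorem hadamard_posDef {n : ℕ} (A X : Matrix (Fin n) (Fin n) ℝ)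
    (hA : A.PosSemidef) (hAdiag : ∀ i, 0 < A i i) (hX : X.PosDef) :
    (A ⊙ X).PosDef :=
  hA.hadamard_posDef_of_diag_pos hAdiag hX
end

section
/- Let X be an (m+k)×(m+k) real symmetric matrix written in block form X = [[X₁₁, X₁₂], [X₁₂ᵀ, X₂₂]], where X₁₁ is m×m and X₂₂ is k×k. Then the block-diagonal matrix [[X₁₁, 0], [0, X₂₂]] is majorized by X. -/
open Matrix

/-!
With `J = diag(1, -1)`, the block-diagonal part of `X` is the average of `X` and `Jᵀ X J`.
If `V` is an orthogonal eigenbasis of that average, its eigenvalues are the average of the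
diagonals of `Vᵀ X V` and `(J V)ᵀ X (J V)`. By Schur's theorem each of these diagonals is
majorized by the eigenvalues `λ` of `X`: a partial sum of the diagonal over `s` is `∑ⱼ λⱼ dⱼ`
with weights `0 ≤ dⱼ ≤ 1` of total mass `#s`, hence at most the sum of `#s` largest `λⱼ`.
Finally, majorization by a fixed vector is preserved under convex combinations.
-/

section SubstochasticWeights

open Finset

variable {ι : Type*} [Fintype ι]

lemma sum_mul_le_sum_of_forall_le {lam d : ι → ℝ} {t : Finset ι} {c : ℝ}
    (hin : ∀ i ∈ t, c ≤ lam i) (hout : ∀ j ∉ t, lam j ≤ c)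
    (hd0 : ∀ j, 0 ≤ d j) (hd1 : ∀ j, d j ≤ 1) (hsum : ∑ j, d j = t.card) :
    ∑ j, lam j * d j ≤ ∑ j ∈ t, lam j := by
  classical
  have key : ∑ j, (lam j - c) * d j ≤ ∑ j ∈ t, (lam j - c) :=
    calc ∑ j, (lam j - c) * d j
        = ∑ j ∈ t, (lam j - c) * d j + ∑ j ∈ tᶜ, (lam j - c) * d j :=
          (sum_add_sum_compl t _).symm
      _ ≤ ∑ j ∈ t, (lam j - c) + 0 := by
          gcongr with i hi
          · exact mul_le_of_le_one_right (sub_nonneg.2 (hin i hi)) (hd1 i)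
          · exact sum_nonpos fun j hj =>
              mul_nonpos_of_nonpos_of_nonneg (sub_nonpos.2 (hout j (mem_compl.1 hj))) (hd0 j)
      _ = ∑ j ∈ t, (lam j - c) := add_zero _
  simp only [sub_mul, sum_sub_distrib, ← mul_sum, hsum, sum_const, nsmul_eq_mul] at key
  linarith

variable [DecidableEq ι]

lemma exists_card_eq_forall_le (lam : ι → ℝ) {r : ℕ} (hr : r ≤ Fintype.card ι) :
    ∃ t : Finset ι, t.card = r ∧ ∀ i ∈ t, ∀ j ∉ t, lam j ≤ lam i := by
  have hne : (powersetCard r (univ : Finset ι)).Nonempty := powersetCard_nonempty.2 hr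
  obtain ⟨t, ht, htmax⟩ := exists_max_image _ (fun u => ∑ j ∈ u, lam j) hne
  have htcard := (mem_powersetCard.1 ht).2
  refine ⟨t, htcard, fun i hi j hj => ?_⟩
  -- otherwise exchanging `i` for `j` would increase the sum over `t`
  have hj' : j ∉ t.erase i := fun h => hj (mem_of_mem_erase h)
  have hswap : insert j (t.erase i) ∈ powersetCard r univ := by
    rw [mem_powersetCard, card_insert_of_notMem hj', card_erase_of_mem hi, htcard]
    exact ⟨subset_univ _, Nat.sub_add_cancel (htcard ▸ card_pos.2 ⟨i, hi⟩)⟩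
  have := htmax _ hswap
  rw [sum_insert hj', sum_erase_eq_sub hi] at this
  linarith

lemma exists_card_eq_sum_mul_le_sum_s16 (lam d : ι → ℝ) (hd0 : ∀ j, 0 ≤ d j) (hd1 : ∀ j, d j ≤ 1)
    {r : ℕ} (hr : r ≤ Fintype.card ι) (hsum : ∑ j, d j = r) :
    ∃ t : Finset ι, t.card = r ∧ ∑ j, lam j * d j ≤ ∑ j ∈ t, lam j := by
  obtain ⟨t, rfl, hsep⟩ := exists_card_eq_forall_le lam hr
  obtain ⟨c, hin, hout⟩ : ∃ c, (∀ i ∈ t, c ≤ lam i) ∧ ∀ j ∉ t, lam j ≤ c := by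
    rcases t.eq_empty_or_nonempty with rfl | ht
    · obtain ⟨c, hc⟩ := (Set.finite_range lam).bddAbove
      exact ⟨c, by simp, fun j _ => hc ⟨j, rfl⟩⟩
    · exact ⟨t.inf' ht lam, fun i hi => inf'_le lam hi,
        fun j hj => le_inf' ht lam fun i hi => hsep i hi j hj⟩
  exact ⟨t, rfl, sum_mul_le_sum_of_forall_le hin hout hd0 hd1 hsum⟩

end SubstochasticWeights

lemma VecMajorizedBy.smul_add_smul {ι : Type*} [Fintype ι] {v v' w : ι → ℝ}
    (hv : VecMajorizedBy v w) (hv' : VecMajorizedBy v' w) {a b : ℝ} (ha : 0 ≤ a) (hb : 0 ≤ b)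
    (hab : a + b = 1) : VecMajorizedBy (a • v + b • v') w := by
  have hsum : ∀ s : Finset ι,
      ∑ i ∈ s, (a • v + b • v') i = a • ∑ i ∈ s, v i + b • ∑ i ∈ s, v' i := fun s => by
    simp only [Pi.add_apply, Pi.smul_apply, Finset.sum_add_distrib, Finset.smul_sum]
  refine ⟨fun s => ?_, ?_⟩
  · obtain ⟨t, ht, hle⟩ := hv.1 s
    obtain ⟨t', ht', hle'⟩ := hv'.1 s
    have hcombo : ∑ i ∈ s, (a • v + b • v') i ≤ max (∑ j ∈ t, w j) (∑ j ∈ t', w j) :=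
      calc ∑ i ∈ s, (a • v + b • v') i = a • ∑ i ∈ s, v i + b • ∑ i ∈ s, v' i := hsum s
        _ ≤ a • ∑ j ∈ t, w j + b • ∑ j ∈ t', w j := by gcongr
        _ ≤ max (∑ j ∈ t, w j) (∑ j ∈ t', w j) := Convex.combo_le_max _ _ ha hb hab
    rcases max_choice (∑ j ∈ t, w j) (∑ j ∈ t', w j) with h | h
    · exact ⟨t, ht, h ▸ hcombo⟩
    · exact ⟨t', ht', h ▸ hcombo⟩
  · rw [hsum, hv.2, hv'.2, ← add_smul, hab, one_smul]

section Spectral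

open Finset

variable {ι : Type*} [Fintype ι] [DecidableEq ι]

lemma vecMajorizedBy_diag_transpose_mul_diagonal_mul {M : Matrix ι ι ℝ}
    (hM : M ∈ orthogonalGroup ι ℝ) (lam : ι → ℝ) :
    VecMajorizedBy (Mᵀ * diagonal lam * M).diag lam := by
  have hrow : ∀ j, ∑ i, M j i ^ 2 = 1 := fun j => by
    simpa [mul_apply, one_apply, sq] using congr_fun₂ ((mem_orthogonalGroup_iff _ _).1 hM) j j
  have hcol : ∀ i, ∑ j, M j i ^ 2 = 1 := fun i => by
    simpa [mul_apply, one_apply, sq] using congr_fun₂ ((mem_orthogonalGroup_iff' _ _).1 hM) i i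
  have hdiag : ∀ i, (Mᵀ * diagonal lam * M).diag i = ∑ j, lam j * M j i ^ 2 := fun i => by
    simp only [diag_apply, mul_apply, transpose_apply, diagonal_apply, mul_ite, mul_zero,
      sum_ite_eq', mem_univ, if_true]
    exact sum_congr rfl fun j _ => by ring
  refine ⟨fun s => ?_, ?_⟩
  · obtain ⟨t, ht, hle⟩ := exists_card_eq_sum_mul_le_sum_s16 lam (fun j => ∑ i ∈ s, M j i ^ 2)
      (fun j => sum_nonneg fun i _ => sq_nonneg _)
      (fun j => hrow j ▸ sum_le_univ_sum_of_nonneg fun i => sq_nonneg _)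
      (card_le_univ s) (by rw [sum_comm, sum_congr rfl fun i _ => hcol i]; simp)
    refine ⟨t, ht, ?_⟩
    simpa only [hdiag, mul_sum, sum_comm (s := s)] using hle
  · rw [← trace, trace_mul_cycle, (mem_orthogonalGroup_iff _ _).1 hM, one_mul, trace_diagonal]

namespace Matrix.IsHermitian

variable {A : Matrix ι ι ℝ} (hA : A.IsHermitian)

lemma eq_eigenvectorUnitary_mul_diagonal_mul_transpose_s16 :
    A = (hA.eigenvectorUnitary : Matrix ι ι ℝ) * diagonal hA.eigenvalues *
      (hA.eigenvectorUnitary : Matrix ι ι ℝ)ᵀ := by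
  simpa [star_eq_conjTranspose, conjTranspose_eq_transpose_of_trivial] using hA.spectral_theorem

lemma transpose_eigenvectorUnitary_mul_mul_eigenvectorUnitary :
    (hA.eigenvectorUnitary : Matrix ι ι ℝ)ᵀ * A * hA.eigenvectorUnitary =
      diagonal hA.eigenvalues := by
  simpa [star_eq_conjTranspose, conjTranspose_eq_transpose_of_trivial] using
    hA.conjStarAlgAut_star_eigenvectorUnitary

lemma vecMajorizedBy_diag_transpose_mul_mul {W : Matrix ι ι ℝ}
    (hW : W ∈ orthogonalGroup ι ℝ) : VecMajorizedBy (Wᵀ * A * W).diag hA.eigenvalues := by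
  set U : Matrix ι ι ℝ := ↑hA.eigenvectorUnitary
  have hUW : Uᵀ * W ∈ orthogonalGroup ι ℝ := by
    simpa [star_eq_conjTranspose, conjTranspose_eq_transpose_of_trivial] using
      mul_mem (star hA.eigenvectorUnitary).2 hW
  have hconj : Wᵀ * A * W = (Uᵀ * W)ᵀ * diagonal hA.eigenvalues * (Uᵀ * W) := by
    conv_lhs => rw [hA.eq_eigenvectorUnitary_mul_diagonal_mul_transpose_s16]
    simp only [transpose_mul, transpose_transpose, Matrix.mul_assoc, U]
  rw [hconj]
  exact vecMajorizedBy_diag_transpose_mul_diagonal_mul hUW _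

end Matrix.IsHermitian

lemma Matrix.IsHermitian.matMajorizedBy_smul_add_smul_conj {A J : Matrix ι ι ℝ}
    (hA : A.IsHermitian) (hJ : J ∈ orthogonalGroup ι ℝ)
    {a b : ℝ} (ha : 0 ≤ a) (hb : 0 ≤ b) (hab : a + b = 1) :
    MatMajorizedBy (a • A + b • (Jᵀ * A * J)) A := by
  have hconj : (Jᵀ * A * J).IsHermitian := by
    simpa [conjTranspose_eq_transpose_of_trivial] using isHermitian_conjTranspose_mul_mul J hA
  have hP : (a • A + b • (Jᵀ * A * J)).IsHermitian :=
    (hA.smul (IsSelfAdjoint.all a)).add (hconj.smul (IsSelfAdjoint.all b))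
  refine ⟨hP, hA, ?_⟩
  set V : Matrix ι ι ℝ := ↑hP.eigenvectorUnitary
  have hV : V ∈ orthogonalGroup ι ℝ := hP.eigenvectorUnitary.2
  have heig : hP.eigenvalues =
      a • (Vᵀ * A * V).diag + b • ((J * V)ᵀ * A * (J * V)).diag := by
    rw [← diag_diagonal hP.eigenvalues,
      ← hP.transpose_eigenvectorUnitary_mul_mul_eigenvectorUnitary]
    simp only [Matrix.mul_add, Matrix.add_mul, Matrix.mul_smul, Matrix.smul_mul, transpose_mul,
      Matrix.mul_assoc, diag_add, diag_smul, V]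
  rw [heig]
  exact (hA.vecMajorizedBy_diag_transpose_mul_mul hV).smul_add_smul
    (hA.vecMajorizedBy_diag_transpose_mul_mul (mul_mem hJ hV)) ha hb hab

end Spectral

/-- Pinching inequality: for a real symmetric block matrix
`X = [[X₁₁, X₁₂], [X₁₂ᵀ, X₂₂]]`, the block-diagonal matrix `[[X₁₁, 0], [0, X₂₂]]` is
majorized by `X`. -/
theorem pinching_majorized {m k : ℕ}
    (X11 : Matrix (Fin m) (Fin m) ℝ) (X12 : Matrix (Fin m) (Fin k) ℝ)
    (X22 : Matrix (Fin k) (Fin k) ℝ)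
    (hX : (Matrix.fromBlocks X11 X12 X12ᵀ X22).IsHermitian) :
    MatMajorizedBy (Matrix.fromBlocks X11 0 0 X22) (Matrix.fromBlocks X11 X12 X12ᵀ X22) := by
  set J : Matrix (Fin m ⊕ Fin k) (Fin m ⊕ Fin k) ℝ := fromBlocks 1 0 0 (-1)
  have hJ : J ∈ orthogonalGroup (Fin m ⊕ Fin k) ℝ := by
    simp [mem_orthogonalGroup_iff, J, fromBlocks_transpose, fromBlocks_multiply, fromBlocks_one]
  -- conjugation by `J` flips the sign of the off-diagonal blocks
  have hpinch : fromBlocks X11 0 0 X22 = (2⁻¹ : ℝ) • fromBlocks X11 X12 X12ᵀ X22 +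
      (2⁻¹ : ℝ) • (Jᵀ * fromBlocks X11 X12 X12ᵀ X22 * J) := by
    simp only [J, fromBlocks_transpose, fromBlocks_multiply, fromBlocks_smul, fromBlocks_add]
    norm_num [← add_smul]
  rw [hpinch]
  exact hX.matMajorizedBy_smul_add_smul_conj hJ (by norm_num) (by norm_num) (by norm_num)
end
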